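/- Bounded projections between two loxodromic orbits (claim in the proof of Theorem 3.1). Let (X,Y) be a G-composite projection graph with modified distances and BGIT constant C, equipped with a composite rotating family satisfying the transfer property. Let γ, γ′ ∈ G be loxodromic on X with common basepoint x₀ (a vertex), and suppose there is μ ≥ 0 such that for all m, n ∈ ℤ, every geodesic in X from γᵐx₀ to (γ′)ⁿx₀ lies at Hausdorff distance at most μ from the set {γⁱx₀ : i between 0 and m} ∪ {(γ′)ʲx₀ : j between 0 and n}. Then L_{γ,γ′}(x₀) := sup { d^⦟_s(γᵐx₀, (γ′)ⁿx₀) : m, n ∈ ℤ, s a vertex for which the quantity is defined } is finite. -/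

import Mathlib

/-- A composite projection system with modified distances on a set `Y` partitioned into
`m` pieces (given by the colouring `col : Y → Fin m`), acted on by a group `G`
by isomorphisms of the system. -/
structure CPS (G : Type) (Y : Type) [Group G] [MulAction G Y] (m : ℕ) : Type where
  /-- the piece (colour) of a point -/
  col : Y → Fin m
  /-- the active set of a point -/
  Act : Y → Set Y
  /-- the projection distance `d^π_y(x,z)` (meaningful when `x, z ∈ Act(y) \ {y}`) -/
  dpi : Y → Y → Y → ℝ
  /-- the modified distance `d_y(x,z)` (meaningful when `x, y, z` lie in one piece) -/
  dmod : Y → Y → Y → ℝ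
  theta : ℝ
  Theta : ℝ
  kappa : ℝ
  theta_pos : 0 < theta
  Theta_pos : 0 < Theta
  kappa_pos : 0 < kappa
  act_piece : ∀ x y : Y, col x = col y → x ∈ Act y
  act_symm : ∀ x y : Y, x ∈ Act y ↔ y ∈ Act x
  dpi_nonneg : ∀ y x z : Y, 0 ≤ dpi y x z
  dpi_symm : ∀ y x z : Y, x ∈ Act y → z ∈ Act y → x ≠ y → z ≠ y → dpi y x z = dpi y z x
  dpi_tri : ∀ y w x z : Y, w ∈ Act y → x ∈ Act y → z ∈ Act y → w ≠ y → x ≠ y → z ≠ y →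
    dpi y w x ≤ dpi y w z + dpi y z x
  behrstock : ∀ x y z : Y, x ∈ Act y → z ∈ Act y → x ≠ y → z ≠ y →
    x ∈ Act z → y ∈ Act z → x ≠ z → y ≠ z → min (dpi y x z) (dpi z x y) ≤ theta
  dpi_proper : ∀ x z : Y, col x = col z →
    {y : Y | col y = col x ∧ x ∈ Act y ∧ z ∈ Act y ∧ x ≠ y ∧ z ≠ y ∧ theta ≤ dpi y x z}.Finite
  separation : ∀ y z : Y, z ∈ Act y → z ≠ y → dpi y z z < theta
  inaction : ∀ x z y : Y, x ∉ Act z → x ∈ Act y → z ∈ Act y → x ≠ y → z ≠ y → dpi y x z ≤ theta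
  finite_filling : ∀ Z : Set Y, ∃ F : Finset Y, ↑F ⊆ Z ∧
    (⋃ x ∈ Z, Act x) ⊆ ⋃ x ∈ (F : Set Y), Act x
  dmod_nonneg : ∀ y x z : Y, 0 ≤ dmod y x z
  dmod_symm : ∀ y x z : Y, col x = col y → col z = col y → x ≠ y → z ≠ y →
    dmod y x z = dmod y z x
  dmod_le_dpi : ∀ y x z : Y, col x = col y → col z = col y → x ≠ y → z ≠ y → x ≠ z →
    dpi y x z - kappa ≤ dmod y x z ∧ dmod y x z ≤ dpi y x z
  dmod_tri : ∀ y x z w : Y, col x = col y → col z = col y → col w = col y →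
    x ≠ y → z ≠ y → w ≠ y → x ≠ z → x ≠ w → z ≠ w →
    dmod y x z - kappa ≤ dmod y x w + dmod y z w
  dmod_min : ∀ x y z : Y, col x = col y → col z = col y → x ≠ y → x ≠ z → y ≠ z →
    min (dmod y x z) (dmod x y z) ≤ kappa
  dmod_mono : ∀ w x y z : Y, col x = col w → col y = col w → col z = col w →
    x ≠ w → y ≠ w → z ≠ w → x ≠ y → x ≠ z → y ≠ z →
    Theta ≤ dmod y x z → dmod w x y ≤ dmod w x z ∧ dmod w y z ≤ dmod w x z
  dmod_proper : ∀ x z : Y, col x = col z → x ≠ z →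
    {y : Y | col y = col x ∧ y ≠ x ∧ y ≠ z ∧ Theta ≤ dmod y x z}.Finite
  smul_col : ∀ (g : G) (x y : Y), col x = col y → col (g • x) = col (g • y)
  smul_act : ∀ (g : G) (x y : Y), x ∈ Act y → (g • x) ∈ Act (g • y)
  smul_dang : ∀ (g : G) (y x z : Y), x ∈ Act y → z ∈ Act y → x ≠ y → z ≠ y →
    (if col (g • x) = col (g • y) ∧ col (g • z) = col (g • y)
      then dmod (g • y) (g • x) (g • z) else dpi (g • y) (g • x) (g • z)) =
    (if col x = col y ∧ col z = col y then dmod y x z else dpi y x z)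

namespace CPS

variable {G Y : Type} [Group G] [MulAction G Y] {m : ℕ}

/-- `S.Dfnd y x z` : the projection distance `d^⦟_y(x,z)` is defined,
i.e. `x, z ∈ Act(y) \ {y}`. -/
def Dfnd (S : CPS G Y m) (y x z : Y) : Prop :=
  x ∈ S.Act y ∧ z ∈ S.Act y ∧ x ≠ y ∧ z ≠ y

/-- The projection distance `d^⦟_y(x,z)`: the modified distance if `x, y, z` all lie in the
same piece, and `d^π_y(x,z)` otherwise. -/
def dang (S : CPS G Y m) (y x z : Y) : ℝ :=
  if S.col x = S.col y ∧ S.col z = S.col y then S.dmod y x z else S.dpi y x z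

/-- The constant `Θ₀ = 2Θ + 3κ`. -/
def Th0 (S : CPS G Y m) : ℝ := 2 * S.Theta + 3 * S.kappa

end CPS

/-- A composite rotating family with rotating control `Θrot` on a composite projection
system acted on by `G`. -/
structure CRF {G Y : Type} [Group G] [MulAction G Y] {m : ℕ} (S : CPS G Y m) : Type where
  /-- the rotation subgroups -/
  Γ : Y → Subgroup G
  /-- the rotating control -/
  Throt : ℝ
  Throt_pos : 0 < Throt
  stab : ∀ x : Y, ∀ γ ∈ Γ x, γ • x = x
  infinite : ∀ x : Y, (Γ x : Set G).Infinite
  rot_fix : ∀ x y : Y, (y = x ∨ y ∉ S.Act x) → ∀ γ ∈ Γ x, γ • y = y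
  rot_fix_dang : ∀ x y : Y, (y = x ∨ y ∉ S.Act x) → ∀ γ ∈ Γ x, ∀ u v : Y,
    S.Dfnd y u v → S.dang y (γ • u) (γ • v) = S.dang y u v
  proper_isotropy : ∀ (R : ℝ) (x y : Y), y ∈ S.Act x → y ≠ x →
    {γ : G | γ ∈ Γ x ∧ S.dang x y (γ • y) < R}.Finite
  conj : ∀ (g : G) (x : Y) (γ : G), γ ∈ Γ x ↔ g * γ * g⁻¹ ∈ Γ (g • x)
  comm : ∀ x z : Y, x ∉ S.Act z → ∀ a ∈ Γ x, ∀ b ∈ Γ z, a * b = b * a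
  large_rot : ∀ x y z : Y, S.col x = S.col y → S.col z = S.col y → x ≠ y → z ≠ y →
    S.dmod y x z ≤ S.Theta → ∀ γ ∈ Γ y, γ ≠ 1 → Throt ≤ S.dmod y x (γ • z)

namespace CRF

variable {G Y : Type} [Group G] [MulAction G Y] {m : ℕ} {S : CPS G Y m}

/-- The kernel `N = ⟨Γ_x : x ∈ Y⟩`. -/
def N (R : CRF S) : Subgroup G := Subgroup.closure (⋃ x : Y, (R.Γ x : Set G))

/-- The Greendlinger shortening property with constant `Θshort`: there is a complexity
function on `N` with values in a well-ordered set (the ordinals), attaining its minimum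
exactly at `1`, which can be lowered by a suitable large rotation. -/
def Greendlinger (R : CRF S) (Θshort : ℝ) : Prop :=
  ∃ c : G → Ordinal.{0},
    (∀ γ ∈ R.N, γ ≠ (1 : G) → c 1 < c γ) ∧
    (∀ γ ∈ R.N, γ ≠ (1 : G) → ∀ x : Y, ∃ s : Y, ∃ γs ∈ R.Γ s,
      c (γs * γ) < c γ ∧
      (x ∉ S.Act s ∨ (x ∈ S.Act s ∧ γ • x ∈ S.Act s ∧ x ≠ s ∧ γ • x ≠ s ∧
        Θshort < S.dang s x (γ • x))))

/-- `xt` is a transfer point for `x` in the piece `i`. -/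
def IsTransferPt (R : CRF S) (x : Y) (i : Fin m) (xt : Y) : Prop :=
  S.col xt = i ∧
  (∀ γ ∈ R.Γ x, ∀ z : Y, S.col z = i → S.Dfnd z (γ • xt) xt →
    S.dang z (γ • xt) xt ≤ S.Th0) ∧
  (∀ y : Y, S.col y = i → y ∈ S.Act x →
    {γ : G | γ ∈ R.Γ x ∧ ¬ S.dang y x (γ • xt) ≤ S.kappa}.Finite) ∧
  (∃ γ ∈ R.Γ x, ∀ y : Y, S.col y = i → y ∈ S.Act x →
    S.dang y x (γ • xt) ≤ S.kappa ∨ S.dang y x xt ≤ S.kappa)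

/-- The transfer property (Transfer Lemma): every point has a transfer point in
every piece. -/
def Transfer (R : CRF S) : Prop := ∀ (x : Y) (i : Fin m), ∃ xt : Y, R.IsTransferPt x i xt

end CRF

/-- A walk in a graph is a geodesic if its length realises the graph distance between
its endpoints. -/
def IsGeodesic {V : Type} (X : SimpleGraph V) {a b : V} (w : X.Walk a b) : Prop :=
  w.length = X.dist a b

/-- Every geodesic triangle is δ-slim: each side is contained in the δ-neighbourhood of
the union of the other two sides. -/
def SlimTriangles {V : Type} (X : SimpleGraph V) (δ : ℝ) : Prop :=
  ∀ (a b c : V) (w₁ : X.Walk a b) (w₂ : X.Walk b c) (w₃ : X.Walk a c),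
    IsGeodesic X w₁ → IsGeodesic X w₂ → IsGeodesic X w₃ →
    ∀ v ∈ w₁.support, ∃ u : V, (u ∈ w₂.support ∨ u ∈ w₃.support) ∧ (X.dist v u : ℝ) ≤ δ

/-- The quotient graph of a graph by a group action: vertices are the orbits, and two
distinct orbits are adjacent iff they have adjacent representatives. -/
def quotGraph (H : Type) [Group H] {V : Type} [MulAction H V] (X : SimpleGraph V) :
    SimpleGraph (Quotient (MulAction.orbitRel H V)) where
  Adj a b := a ≠ b ∧ ∃ x y : V, Quotient.mk (MulAction.orbitRel H V) x = a ∧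
    Quotient.mk (MulAction.orbitRel H V) y = b ∧ X.Adj x y
  symm := by
    constructor
    rintro a b ⟨hab, x, y, hx, hy, hxy⟩
    exact ⟨hab.symm, y, x, hy, hx, hxy.symm⟩
  loopless := by
    constructor
    rintro a ⟨hab, -⟩
    exact hab rfl

/-- The quotient map from a graph to its quotient by a group action. -/
def qmap (H : Type) [Group H] {V : Type} [MulAction H V] (v : V) :
    Quotient (MulAction.orbitRel H V) := Quotient.mk _ v

section GraphDefs

variable {G Y : Type} [Group G] [MulAction G Y] {m : ℕ}

/-- The bounded geodesic image property with constant `C`. -/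
def BGIT (S : CPS G Y m) (X : SimpleGraph Y) (C : ℝ) : Prop :=
  ∀ s x z : Y, S.col x = S.col s → S.col z = S.col s → x ≠ s → z ≠ s →
    C < S.dmod s x z → ∀ w : X.Walk x z, IsGeodesic X w → ∃ v ∈ w.support, X.dist v s = 1

/-- `G` acts on the graph `X` by graph automorphisms. -/
def GraphEquiv (G : Type) [Group G] {Y : Type} [MulAction G Y] (X : SimpleGraph Y) : Prop :=
  ∀ (g : G) (x y : Y), X.Adj x y → X.Adj (g • x) (g • y)

/-- Each rotation subgroup fixes every vertex adjacent to its apex. -/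
def FixNbrs {S : CPS G Y m} (R : CRF S) (X : SimpleGraph Y) : Prop :=
  ∀ s v : Y, X.Adj v s → ∀ γ ∈ R.Γ s, γ • v = v

/-- `g` is loxodromic on `X`. -/
def IsLox (X : SimpleGraph Y) (g : G) : Prop :=
  ∃ (x₀ : Y) (lam : ℝ), 0 < lam ∧ ∀ n : ℤ, lam * |(n : ℝ)| ≤ (X.dist x₀ (g ^ n • x₀) : ℝ)

/-- `g` is WPD for the action of `G` on `X`. -/
def IsWPD (X : SimpleGraph Y) (g : G) : Prop :=
  ∀ (x₀ : Y) (r : ℝ), 0 ≤ r → ∃ n₀ : ℕ, ∀ n : ℕ, n₀ ≤ n →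
    {h : G | (X.dist x₀ (h • x₀) : ℝ) ≤ r ∧
      (X.dist (g ^ n • x₀) ((h * g ^ n) • x₀) : ℝ) ≤ r}.Finite

/-- `φ` and `ψ` are independent loxodromic elements with respect to `x₀`. -/
def Indep (X : SimpleGraph Y) (φ ψ : G) (x₀ : Y) : Prop :=
  ∀ R : ℝ, {p : ℤ × ℤ | (X.dist (φ ^ p.1 • x₀) (ψ ^ p.2 • x₀) : ℝ) ≤ R}.Finite

/-- The image of `g` in `G/N` is loxodromic on `X/N`. -/
def IsLoxQuot (N : Subgroup G) (X : SimpleGraph Y) (g : G) : Prop :=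
  ∃ (x₀ : Y) (lam : ℝ), 0 < lam ∧ ∀ n : ℤ, lam * |(n : ℝ)| ≤
    ((quotGraph ↥N X).dist (qmap ↥N x₀) (qmap ↥N (g ^ n • x₀)) : ℝ)

/-- The image of `g` in `G/N` is WPD for the action of `G/N` on `X/N`. -/
def IsWPDQuot (N : Subgroup G) (X : SimpleGraph Y) (g : G) : Prop :=
  ∀ (x₀ : Y) (r : ℝ), 0 ≤ r → ∃ n₀ : ℕ, ∀ n : ℕ, n₀ ≤ n →
    {hbar : G ⧸ N | ∃ h : G, (QuotientGroup.mk h : G ⧸ N) = hbar ∧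
      ((quotGraph ↥N X).dist (qmap ↥N x₀) (qmap ↥N (h • x₀)) : ℝ) ≤ r ∧
      ((quotGraph ↥N X).dist (qmap ↥N (g ^ n • x₀))
        (qmap ↥N ((h * g ^ n) • x₀)) : ℝ) ≤ r}.Finite

/-- The images of `φ` and `ψ` in `G/N` are independent with respect to the image
of `x₀` in `X/N`. -/
def QuotIndep (N : Subgroup G) (X : SimpleGraph Y) (φ ψ : G) (x₀ : Y) : Prop :=
  ∀ R : ℝ, {p : ℤ × ℤ | ((quotGraph ↥N X).dist (qmap ↥N (φ ^ p.1 • x₀))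
    (qmap ↥N (ψ ^ p.2 • x₀)) : ℝ) ≤ R}.Finite

/-- The action of `G/N` on `X/N` is non-elementary: it admits two independent
loxodromic elements. -/
def NonElemQuot (N : Subgroup G) (X : SimpleGraph Y) : Prop :=
  ∃ (φ ψ : G) (x₀ : Y), IsLoxQuot N X φ ∧ IsLoxQuot N X ψ ∧ QuotIndep N X φ ψ x₀

end GraphDefs

namespace BPaux

open CPS CRF

variable {G Y : Type} [Group G] [MulAction G Y] {m : ℕ}

section CPSbasic

variable (S : CPS G Y m)

lemma mem_act_self (x : Y) : x ∈ S.Act x := S.act_piece x x rfl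

lemma smul_col_iff (g : G) (x y : Y) : S.col (g • x) = S.col (g • y) ↔ S.col x = S.col y := by
  constructor
  · intro h
    have := S.smul_col g⁻¹ _ _ h
    simpa using this
  · exact S.smul_col g x y

lemma smul_act_iff (g : G) (x y : Y) : (g • x) ∈ S.Act (g • y) ↔ x ∈ S.Act y := by
  constructor
  · intro h
    have := S.smul_act g⁻¹ _ _ h
    simpa using this
  · exact S.smul_act g x y

omit [Group G] [MulAction G Y] in
lemma smul_ne_iff' {M : Type} [Group M] [MulAction M Y] (g : M) (x y : Y) :
    g • x ≠ g • y ↔ x ≠ y := by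
  constructor
  · intro h he; exact h (by rw [he])
  · intro h he; exact h (smul_left_cancel g he)

lemma dang_smul (g : G) (y x z : Y) (hx : x ∈ S.Act y) (hz : z ∈ S.Act y)
    (hxy : x ≠ y) (hzy : z ≠ y) :
    S.dang (g • y) (g • x) (g • z) = S.dang y x z := by
  simpa [CPS.dang] using S.smul_dang g y x z hx hz hxy hzy

lemma Dfnd_smul (g : G) {y x z : Y} (h : S.Dfnd y x z) : S.Dfnd (g • y) (g • x) (g • z) := by
  obtain ⟨h1, h2, h3, h4⟩ := h
  exact ⟨S.smul_act g _ _ h1, S.smul_act g _ _ h2,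
    (smul_ne_iff' g x y).2 h3, (smul_ne_iff' g z y).2 h4⟩

lemma dang_eq_dmod {y x z : Y} (hx : S.col x = S.col y) (hz : S.col z = S.col y) :
    S.dang y x z = S.dmod y x z := if_pos ⟨hx, hz⟩

lemma dang_eq_dpi {y x z : Y} (h : ¬ (S.col x = S.col y ∧ S.col z = S.col y)) :
    S.dang y x z = S.dpi y x z := if_neg h

lemma dang_nonneg (y x z : Y) : 0 ≤ S.dang y x z := by
  unfold CPS.dang
  split
  · exact S.dmod_nonneg y x z
  · exact S.dpi_nonneg y x z

/-- conversion: `dang ≤ dpi` for distinct legit points. -/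
lemma dang_le_dpi {s x z : Y} (hx : x ∈ S.Act s) (hz : z ∈ S.Act s)
    (hxs : x ≠ s) (hzs : z ≠ s) (hxz : x ≠ z) :
    S.dang s x z ≤ S.dpi s x z := by
  unfold CPS.dang
  split
  · next h => exact (S.dmod_le_dpi s x z h.1 h.2 hxs hzs hxz).2
  · exact le_rfl

/-- conversion: `dpi ≤ dang + (κ + θ)` for legit points (possibly equal). -/
lemma dpi_le_dang_add {s x z : Y} (hx : x ∈ S.Act s) (hz : z ∈ S.Act s)
    (hxs : x ≠ s) (hzs : z ≠ s) :
    S.dpi s x z ≤ S.dang s x z + (S.kappa + S.theta) := by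
  by_cases hxz : x = z
  · subst hxz
    have h1 : S.dpi s x x < S.theta := S.separation s x hx hxs
    have h2 : 0 ≤ S.dang s x x := dang_nonneg S s x x
    have h3 : 0 < S.kappa := S.kappa_pos
    linarith
  · unfold CPS.dang
    split
    · next h =>
      have := (S.dmod_le_dpi s x z h.1 h.2 hxs hzs hxz).1
      have h3 : 0 < S.theta := S.theta_pos
      linarith
    · have h3 : 0 < S.theta := S.theta_pos
      have h4 : 0 < S.kappa := S.kappa_pos
      linarith

lemma dang_comm {s x z : Y} (hx : x ∈ S.Act s) (hz : z ∈ S.Act s)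
    (hxs : x ≠ s) (hzs : z ≠ s) :
    S.dang s x z = S.dang s z x := by
  unfold CPS.dang
  by_cases h : S.col x = S.col s ∧ S.col z = S.col s
  · rw [if_pos h, if_pos ⟨h.2, h.1⟩, S.dmod_symm s x z h.1 h.2 hxs hzs]
  · rw [if_neg h, if_neg (fun h' => h ⟨h'.2, h'.1⟩), S.dpi_symm s x z hx hz hxs hzs]

end CPSbasic

section CRFlemmas

variable {S : CPS G Y m} (R : CRF S)

lemma Th0_nonneg : 0 ≤ S.Th0 := by
  have h1 := S.Theta_pos; have h2 := S.kappa_pos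
  unfold CPS.Th0; linarith

omit [Group G] in
lemma exists_infinite_fiber_col (T : Set G) (hT : T.Infinite) (f : G → Fin m) :
    ∃ i : Fin m, {g ∈ T | f g = i}.Infinite := by
  by_contra h
  push_neg at h
  have : T ⊆ ⋃ i : Fin m, {g ∈ T | f g = i} := by
    intro g hg
    exact Set.mem_iUnion.2 ⟨f g, hg, rfl⟩
  exact hT ((Set.finite_iUnion h).subset this)

lemma sigma_infinite (x u : Y) (j : Fin m) (hju : S.col u = j) :
    {δ : G | δ ∈ R.Γ x ∧ S.col (δ • u) = j}.Infinite := by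
  obtain ⟨i, hi⟩ := exists_infinite_fiber_col (m := m) (R.Γ x : Set G) (R.infinite x)
    (fun g => S.col (g • u))
  obtain ⟨δ₂, hδ₂m, hδ₂c⟩ := hi.nonempty
  have hinj : Function.Injective (fun δ : G => δ₂⁻¹ * δ) := fun a b h => by
    simpa using mul_left_cancel h
  refine Set.Infinite.mono ?_ (hi.image hinj.injOn)
  rintro _ ⟨δ₁, ⟨hm, hc⟩, rfl⟩
  refine ⟨mul_mem (inv_mem hδ₂m) hm, ?_⟩
  have h1 : S.col (δ₁ • u) = S.col (δ₂ • u) := by rw [hc, hδ₂c]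
  have h2 := S.smul_col δ₂⁻¹ _ _ h1
  rw [smul_smul, smul_smul, inv_mul_cancel, one_smul] at h2
  rw [h2, hju]

lemma fiber_finite (x u s : Y) (hus : u ≠ s) (hxs : x ≠ s) :
    {δ : G | δ ∈ R.Γ x ∧ δ • u = s}.Finite := by
  by_cases hAct : u ∈ S.Act x
  · by_cases hux : u = x
    · subst hux
      convert Set.finite_empty
      ext δ
      simp only [Set.mem_setOf_eq, Set.mem_empty_iff_false, iff_false, not_and]
      intro hm he
      exact hxs (by rw [← R.stab u δ hm, he])
    · by_contra hinf
      have hinf' : Set.Infinite {δ : G | δ ∈ R.Γ x ∧ δ • u = s} := hinf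
      obtain ⟨δ₀, hδ₀m, hδ₀e⟩ := hinf'.nonempty
      have hinj : Function.Injective (fun δ : G => δ₀⁻¹ * δ) := fun a b h => by
        simpa using mul_left_cancel h
      have hfin := R.proper_isotropy (S.dang x u u + 1) x u hAct hux
      refine (Set.Infinite.mono ?_ (hinf'.image hinj.injOn)) hfin
      rintro _ ⟨δ, ⟨hm, he⟩, rfl⟩
      refine ⟨mul_mem (inv_mem hδ₀m) hm, ?_⟩
      have hfixu : (δ₀⁻¹ * δ) • u = u := by
        rw [mul_smul, he, ← hδ₀e, inv_smul_smul]
      rw [hfixu]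
      linarith
  · convert Set.finite_empty
    ext δ
    simp only [Set.mem_setOf_eq, Set.mem_empty_iff_false, iff_false, not_and]
    intro hm he
    exact hus (by rw [← R.rot_fix x u (Or.inr hAct) δ hm, he])

/-- The core proxy bound: the projection of a point `x` onto an apex `s` is close to the
projection of a transfer proxy `u` (in the piece of `s`). -/
lemma proxy_bound {x u s : Y}
    (hcolu : S.col u = S.col s)
    (hxs : x ∈ S.Act s)
    (hxns : x ≠ s) (huns : u ≠ s)
    (hI : ∀ δ ∈ R.Γ x, S.Dfnd s (δ • u) u → S.dang s (δ • u) u ≤ S.Th0)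
    (hII : {δ : G | δ ∈ R.Γ x ∧ S.col (δ • u) = S.col s ∧ δ • u ≠ s ∧
      ¬ S.dang s x (δ • u) ≤ S.kappa}.Finite) :
    S.dpi s x u ≤ S.Th0 + 3 * S.kappa + 2 * S.theta := by
  have hθ := S.theta_pos
  have hκ := S.kappa_pos
  have hT0 : (0:ℝ) ≤ S.Th0 := Th0_nonneg (S := S)
  have hu_s : u ∈ S.Act s := S.act_piece u s hcolu
  by_cases hxu : x = u
  · subst hxu
    have := S.separation s x hxs hxns
    linarith
  · have hSig := sigma_infinite R x u (S.col s) hcolu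
    have hfib := fiber_finite R x u s huns hxns
    obtain ⟨δ, hδin, hδout⟩ := ((hSig.diff (hII.union hfib)).nonempty)
    obtain ⟨hδΓ, hδcol⟩ := hδin
    simp only [Set.mem_union, Set.mem_setOf_eq, not_or] at hδout
    obtain ⟨hnot1, hnot2⟩ := hδout
    have hδs : δ • u ≠ s := fun he => hnot2 ⟨hδΓ, he⟩
    have hδgood : S.dang s x (δ • u) ≤ S.kappa := by
      by_contra hbad
      exact hnot1 ⟨hδΓ, hδcol, hδs, hbad⟩
    have hδu_s : (δ • u) ∈ S.Act s := S.act_piece _ s hδcol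
    have h1 : S.dpi s x (δ • u) ≤ S.kappa + (S.kappa + S.theta) := by
      have := dpi_le_dang_add S hxs hδu_s hxns hδs
      linarith
    have h2 : S.dpi s (δ • u) u ≤ S.Th0 + (S.kappa + S.theta) := by
      by_cases heq : δ • u = u
      · rw [heq]
        have := S.separation s u hu_s huns
        linarith
      · have hb := hI δ hδΓ ⟨hδu_s, hu_s, hδs, huns⟩
        have := dpi_le_dang_add S hδu_s hu_s hδs huns
        linarith
    have h3 := S.dpi_tri s x u (δ • u) hxs hu_s hδu_s hxns huns hδs
    linarith

/-- The transfer clauses transported by a group element `g`, localized at an apex `s`. -/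
lemma transported_clauses {x' xt : Y} {i : Fin m} (ht : R.IsTransferPt x' i xt) (g : G) (s : Y)
    (hcols : S.col (g • xt) = S.col s) (hsx : s ∈ S.Act (g • x')) (hxs' : g • x' ≠ s) :
    (∀ δ ∈ R.Γ (g • x'), S.Dfnd s (δ • (g • xt)) (g • xt) →
        S.dang s (δ • (g • xt)) (g • xt) ≤ S.Th0) ∧
      {δ : G | δ ∈ R.Γ (g • x') ∧ S.col (δ • (g • xt)) = S.col s ∧ δ • (g • xt) ≠ s ∧
        ¬ S.dang s (g • x') (δ • (g • xt)) ≤ S.kappa}.Finite := by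
  obtain ⟨htcol, htI, htII, _⟩ := ht
  -- the colour of `g⁻¹ • s` is `i`
  have hcol_s : S.col (g⁻¹ • s) = i := by
    have h1 : S.col xt = S.col (g⁻¹ • s) := by
      have := S.smul_col g⁻¹ _ _ hcols
      simpa using this
    rw [← h1, htcol]
  have hgconj : ∀ δ : G, δ ∈ R.Γ (g • x') → g⁻¹ * δ * g ∈ R.Γ x' := by
    intro δ hδ
    apply (R.conj g x' (g⁻¹ * δ * g)).mpr
    have he : g * (g⁻¹ * δ * g) * g⁻¹ = δ := by group
    rw [he]
    exact hδ
  have hsmul : ∀ δ : G, δ • (g • xt) = g • ((g⁻¹ * δ * g) • xt) := by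
    intro δ
    rw [smul_smul, smul_smul]
    congr 1
    group
  constructor
  · intro δ hδ hDf
    have hγΓ := hgconj δ hδ
    set γ := g⁻¹ * δ * g with hγ
    have hre : δ • (g • xt) = g • (γ • xt) := hsmul δ
    rw [hre] at hDf ⊢
    have hDf' : S.Dfnd (g⁻¹ • s) (γ • xt) xt := by
      have := Dfnd_smul S g⁻¹ hDf
      simpa using this
    have hval : S.dang s (g • (γ • xt)) (g • xt) = S.dang (g⁻¹ • s) (γ • xt) xt := by
      have := dang_smul S g (g⁻¹ • s) (γ • xt) xt hDf'.1 hDf'.2.1 hDf'.2.2.1 hDf'.2.2.2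
      simpa using this
    rw [hval]
    exact htI γ hγΓ (g⁻¹ • s) hcol_s hDf'
  · -- inject into the clause-(ii) set at `y := g⁻¹ • s`
    have hy_act : (g⁻¹ • s) ∈ S.Act x' := by
      have := S.smul_act g⁻¹ _ _ hsx
      simpa using this
    have hfin := htII (g⁻¹ • s) hcol_s hy_act
    have hinj : Function.Injective (fun δ : G => g⁻¹ * δ * g) := by
      intro a b h
      simpa using h
    refine Set.Finite.subset (hfin.image (fun δ => g * δ * g⁻¹)) ?_
    rintro δ ⟨hδΓ, hδcol, hδs, hδbad⟩
    set γ := g⁻¹ * δ * g with hγdef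
    have hγΓ := hgconj δ hδΓ
    have hre : δ • (g • xt) = g • (γ • xt) := hsmul δ
    refine ⟨γ, ⟨hγΓ, ?_⟩, by rw [hγdef]; group⟩
    -- value equality needs memberships at `g⁻¹ • s`
    intro hcon
    apply hδbad
    have hmem1 : (γ • xt) ∈ S.Act (g⁻¹ • s) := by
      have : (δ • (g • xt)) ∈ S.Act s := S.act_piece _ s hδcol
      rw [hre] at this
      have := S.smul_act g⁻¹ _ _ this
      simpa using this
    have hmem2 : x' ∈ S.Act (g⁻¹ • s) := by
      have h1 : (g • x') ∈ S.Act s := (S.act_symm _ _).1 hsx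
      have := S.smul_act g⁻¹ _ _ h1
      simpa using this
    have hne1 : (γ • xt) ≠ (g⁻¹ • s) := by
      intro he
      apply hδs
      rw [hre, he]
      simp
    have hne2 : x' ≠ (g⁻¹ • s) := by
      intro he
      apply hxs'
      rw [he]
      simp
    have hval : S.dang s (g • x') (δ • (g • xt)) = S.dang (g⁻¹ • s) x' (γ • xt) := by
      rw [hre]
      have := dang_smul S g (g⁻¹ • s) x' (γ • xt) hmem2 hmem1 hne2 hne1
      simpa using this
    rw [hval]
    exact hcon

end CRFlemmas

section PairBound

variable {S : CPS G Y m} (R : CRF S) {X : SimpleGraph Y} {C : ℝ}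

lemma dmod_self_le (hbgit : BGIT S X C) (hfix : FixNbrs R X)
    (s x : Y) (hcol : S.col x = S.col s) (hx : x ≠ s) : S.dmod s x x ≤ C := by
  by_contra hlt
  push_neg at hlt
  have hnil : IsGeodesic X (SimpleGraph.Walk.nil : X.Walk x x) := by
    simp [IsGeodesic, SimpleGraph.dist_self]
  obtain ⟨v, hv, hd⟩ := hbgit s x x hcol hcol hx hx hlt SimpleGraph.Walk.nil hnil
  have hvx : v = x := by simpa using hv
  subst hvx
  have hadj : X.Adj v s := SimpleGraph.dist_eq_one_iff_adj.1 hd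
  have hfixv := hfix s v hadj
  have hfin := R.proper_isotropy (S.dang s v v + 1) s v (S.act_piece v s hcol) hx
  have hsub : (R.Γ s : Set G) ⊆ {γ | γ ∈ R.Γ s ∧ S.dang s v (γ • v) < S.dang s v v + 1} := by
    intro g hg
    exact ⟨hg, by rw [hfixv g hg]; linarith⟩
  exact ((R.infinite s).mono hsub) hfin

/-- The fixed-pair bound: for any fixed pair, projections onto all apexes are bounded. -/
lemma pair_bound (hbgit : BGIT S X C) (hfix : FixNbrs R X) (htrans : R.Transfer)
    (p q : Y) : ∃ B : ℝ, ∀ s : Y, S.Dfnd s p q → S.dang s p q ≤ B := by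
  have hθ := S.theta_pos
  have hκ := S.kappa_pos
  have hT0 : (0:ℝ) ≤ S.Th0 := Th0_nonneg (S := S)
  set Kp : ℝ := S.Th0 + 3 * S.kappa + 2 * S.theta with hKp
  by_cases hpq : p = q
  · subst hpq
    refine ⟨max C S.theta, fun s hs => ?_⟩
    obtain ⟨h1, h2, h3, h4⟩ := hs
    by_cases hcol : S.col p = S.col s
    · rw [dang_eq_dmod S hcol hcol]
      exact le_trans (dmod_self_le R hbgit hfix s p hcol h3) (le_max_left _ _)
    · rw [dang_eq_dpi S (fun h => hcol h.1)]
      exact le_trans (le_of_lt (S.separation s p h1 h3)) (le_max_right _ _)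
  · set T : ℝ := 2 * Kp + S.theta with hT
    set Bad : Set Y := {s : Y | S.Dfnd s p q ∧ T < S.dang s p q} with hBad
    choose xt hxt using htrans p
    choose zt hzt using htrans q
    have hBadfin : Bad.Finite := by
      have hsub : Bad ⊆ ⋃ j : Fin m,
          ({y : Y | S.col y = S.col (xt j) ∧ xt j ∈ S.Act y ∧ zt j ∈ S.Act y ∧
              xt j ≠ y ∧ zt j ≠ y ∧ S.theta ≤ S.dpi y (xt j) (zt j)} ∪ {xt j, zt j}) := by
        rintro s ⟨⟨hp1, hq1, hp2, hq2⟩, hTs⟩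
        set j := S.col s with hj
        refine Set.mem_iUnion.2 ⟨j, ?_⟩
        by_cases hxs : xt j = s
        · exact Or.inr (Or.inl hxs.symm)
        by_cases hzs : zt j = s
        · exact Or.inr (Or.inr hzs.symm)
        left
        -- transported clauses at g = 1
        have hcxt : S.col ((1:G) • xt j) = S.col s := by
          rw [one_smul, (hxt j).1]
        have hsp : s ∈ S.Act ((1:G) • p) := by
          rw [one_smul]; exact (S.act_symm p s).1 hp1
        have hps1 : (1:G) • p ≠ s := by rw [one_smul]; exact hp2
        obtain ⟨hI, hII⟩ := transported_clauses R (hxt j) 1 s hcxt hsp hps1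
        simp only [one_smul] at hI hII
        have hb1 : S.dpi s p (xt j) ≤ Kp :=
          proxy_bound R ((hxt j).1) hp1 hp2 hxs hI hII
        have hcz : S.col ((1:G) • zt j) = S.col s := by
          rw [one_smul, (hzt j).1]
        have hsq : s ∈ S.Act ((1:G) • q) := by
          rw [one_smul]; exact (S.act_symm q s).1 hq1
        have hqs1 : (1:G) • q ≠ s := by rw [one_smul]; exact hq2
        obtain ⟨hI', hII'⟩ := transported_clauses R (hzt j) 1 s hcz hsq hqs1
        simp only [one_smul] at hI' hII'
        have hb2 : S.dpi s q (zt j) ≤ Kp :=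
          proxy_bound R ((hzt j).1) hq1 hq2 hzs hI' hII'
        -- memberships of the transfer points at s
        have hxtm : xt j ∈ S.Act s := S.act_piece _ s ((hxt j).1)
        have hztm : zt j ∈ S.Act s := S.act_piece _ s ((hzt j).1)
        -- chain
        have hc1 := S.dpi_tri s p q (xt j) hp1 hq1 hxtm hp2 hq2 hxs
        have hc2 := S.dpi_tri s (xt j) q (zt j) hxtm hq1 hztm hxs hq2 hzs
        have hsymm : S.dpi s (zt j) q = S.dpi s q (zt j) :=
          S.dpi_symm s (zt j) q hztm hq1 hzs hq2
        have hVle : S.dang s p q ≤ S.dpi s p q := dang_le_dpi S hp1 hq1 hp2 hq2 hpq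
        have hbig : S.theta ≤ S.dpi s (xt j) (zt j) := by
          by_contra hsm
          push_neg at hsm
          have : S.dang s p q ≤ T := by
            rw [hT]
            have := hsymm
            linarith
          linarith
        exact ⟨(((hxt j).1).trans hj).symm, hxtm, hztm, hxs, hzs, hbig⟩
      refine Set.Finite.subset (Set.finite_iUnion fun j => ?_) hsub
      refine Set.Finite.union ?_ (Set.Finite.insert _ (Set.finite_singleton _))
      have hcc : S.col (xt j) = S.col (zt j) := by rw [(hxt j).1, (hzt j).1]
      exact S.dpi_proper (xt j) (zt j) hcc
    have himg : ((fun s => S.dang s p q) '' Bad).Finite := hBadfin.image _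
    obtain ⟨B₀, hB₀⟩ := himg.bddAbove
    refine ⟨max T B₀, fun s hs => ?_⟩
    by_cases hT' : S.dang s p q ≤ T
    · exact le_trans hT' (le_max_left _ _)
    · push_neg at hT'
      have hmem : S.dang s p q ∈ (fun s => S.dang s p q) '' Bad := ⟨s, ⟨hs, hT'⟩, rfl⟩
      exact le_trans (hB₀ hmem) (le_max_right _ _)

end PairBound

section Graph

variable {X : SimpleGraph Y}

/-- The graph homomorphism given by the action of `g`. -/
def ghom (hequiv : GraphEquiv G X) (g : G) : X →g X :=
  ⟨fun y => g • y, fun {a b} h => hequiv g a b h⟩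

lemma exists_geodesic (hconn : X.Connected) (u v : Y) :
    ∃ w : X.Walk u v, IsGeodesic X w :=
  hconn.exists_walk_length_eq_dist u v

lemma dist_smul (hconn : X.Connected) (hequiv : GraphEquiv G X) (g : G) (u v : Y) :
    X.dist (g • u) (g • v) = X.dist u v := by
  have key : ∀ (h : G) (a b : Y), X.dist (h • a) (h • b) ≤ X.dist a b := by
    intro h a b
    obtain ⟨w, hw⟩ := hconn.exists_walk_length_eq_dist a b
    calc X.dist (h • a) (h • b) ≤ (w.map (ghom hequiv h)).length := SimpleGraph.dist_le _
      _ = w.length := by rw [SimpleGraph.Walk.length_map]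
      _ = X.dist a b := hw
  refine le_antisymm (key g u v) ?_
  have := key g⁻¹ (g • u) (g • v)
  simpa using this

lemma dist_tri_real (hconn : X.Connected) (u v w : Y) :
    (X.dist u w : ℝ) ≤ (X.dist u v : ℝ) + (X.dist v w : ℝ) := by
  exact_mod_cast hconn.dist_triangle

/-- Transport of a vertex on a geodesic to a geodesic with nearby endpoints. -/
lemma transport (hconn : X.Connected) {δ : ℝ} (hslim : SlimTriangles X δ) (hδ : 0 ≤ δ)
    {P Q P' Q' : Y} {D₁ D₂ : ℝ} (hD₁ : 0 ≤ D₁) (hD₂ : 0 ≤ D₂)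
    (dP : (X.dist P' P : ℝ) ≤ D₁) (dQ : (X.dist Q Q' : ℝ) ≤ D₂)
    (w' : X.Walk P' Q') (hw' : IsGeodesic X w')
    (w : X.Walk P Q) (hw : IsGeodesic X w) :
    ∀ v ∈ w'.support, ∃ c ∈ w.support, (X.dist v c : ℝ) ≤ 2*δ + D₁ + D₂ := by
  classical
  intro v hv
  obtain ⟨e₂, he₂⟩ := exists_geodesic hconn Q' Q
  obtain ⟨w₂, hw₂⟩ := exists_geodesic hconn P' Q
  obtain ⟨u, hu_or, hu_d⟩ := hslim P' Q' Q w' e₂ w₂ hw' he₂ hw₂ v hv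
  rcases hu_or with hu2 | hu3
  · -- u is on the short side Q' → Q
    refine ⟨Q, SimpleGraph.Walk.end_mem_support w, ?_⟩
    have hdq : X.dist u Q ≤ X.dist Q' Q := by
      have h1 := SimpleGraph.dist_le (e₂.dropUntil u hu2)
      have h2 := SimpleGraph.Walk.length_dropUntil_le e₂ hu2
      rw [IsGeodesic] at he₂
      omega
    have hQ : (X.dist Q' Q : ℝ) ≤ D₂ := by
      rw [SimpleGraph.dist_comm] at dQ
      exact dQ
    have htri := dist_tri_real hconn v u Q
    have hdq' : (X.dist u Q : ℝ) ≤ D₂ := le_trans (by exact_mod_cast hdq) hQ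
    linarith
  · -- u is on the geodesic P' → Q
    obtain ⟨e₁, he₁⟩ := exists_geodesic hconn P' P
    have hwrev : IsGeodesic X w.reverse := by
      rw [IsGeodesic, SimpleGraph.Walk.length_reverse, SimpleGraph.dist_comm]
      exact hw
    obtain ⟨c, hc_or, hc_d⟩ := hslim P' Q P w₂ w.reverse e₁ hw₂ hwrev he₁ u hu3
    rcases hc_or with hcw | hce
    · refine ⟨c, by simpa [SimpleGraph.Walk.support_reverse] using hcw, ?_⟩
      have htri := dist_tri_real hconn v u c
      linarith
    · refine ⟨P, SimpleGraph.Walk.start_mem_support w, ?_⟩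
      have hdp : X.dist c P ≤ X.dist P' P := by
        have h1 := SimpleGraph.dist_le (e₁.dropUntil c hce)
        have h2 := SimpleGraph.Walk.length_dropUntil_le e₁ hce
        rw [IsGeodesic] at he₁
        omega
      have hdp' : (X.dist c P : ℝ) ≤ D₁ := le_trans (by exact_mod_cast hdp) dP
      have htri1 := dist_tri_real hconn v u P
      have htri2 := dist_tri_real hconn u c P
      linarith

end Graph

section Hug

variable {X : SimpleGraph Y}

omit [Group G] [MulAction G Y] in
lemma zsmul_comp {M : Type} [Group M] [MulAction M Y] (g : M) (r t : ℤ) (y : Y) :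
    g ^ r • (g ^ t • y) = g ^ (r + t) • y := by
  rw [smul_smul, ← zpow_add]

/-- The union of the two translated orbit segments. -/
def Hug (γ γ' : G) (x₀ : Y) (g₀ : G) (a b : ℤ) : Set Y :=
  {y | ∃ l : ℤ, min 0 a ≤ l ∧ l ≤ max 0 a ∧ y = g₀ • (γ ^ l • x₀)} ∪
  {y | ∃ l : ℤ, min 0 b ≤ l ∧ l ≤ max 0 b ∧ y = g₀ • (γ' ^ l • x₀)}

lemma hug_spec (hconn : X.Connected) (hequiv : GraphEquiv G X)
    {γ γ' : G} {x₀ : Y} {μ : ℝ}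
    (hμ : ∀ (a b : ℤ) (w : X.Walk (γ ^ a • x₀) (γ' ^ b • x₀)), IsGeodesic X w →
      (∀ v ∈ w.support, ∃ u : Y,
        ((∃ i : ℤ, min 0 a ≤ i ∧ i ≤ max 0 a ∧ u = γ ^ i • x₀) ∨
          (∃ j : ℤ, min 0 b ≤ j ∧ j ≤ max 0 b ∧ u = γ' ^ j • x₀)) ∧
        (X.dist v u : ℝ) ≤ μ) ∧
      (∀ u : Y,
        ((∃ i : ℤ, min 0 a ≤ i ∧ i ≤ max 0 a ∧ u = γ ^ i • x₀) ∨
          (∃ j : ℤ, min 0 b ≤ j ∧ j ≤ max 0 b ∧ u = γ' ^ j • x₀)) →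
        ∃ v ∈ w.support, (X.dist v u : ℝ) ≤ μ))
    (g₀ : G) (a b : ℤ) :
    ∀ (w : X.Walk (g₀ • (γ ^ a • x₀)) (g₀ • (γ' ^ b • x₀))), IsGeodesic X w →
      ∀ v ∈ w.support, ∃ h ∈ Hug γ γ' x₀ g₀ a b, (X.dist v h : ℝ) ≤ μ := by
  intro w hw v hv
  have he1 : (ghom hequiv g₀⁻¹) (g₀ • (γ ^ a • x₀)) = γ ^ a • x₀ := by
    show g₀⁻¹ • (g₀ • (γ ^ a • x₀)) = γ ^ a • x₀
    exact inv_smul_smul g₀ _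
  have he2 : (ghom hequiv g₀⁻¹) (g₀ • (γ' ^ b • x₀)) = γ' ^ b • x₀ := by
    show g₀⁻¹ • (g₀ • (γ' ^ b • x₀)) = γ' ^ b • x₀
    exact inv_smul_smul g₀ _
  set w1 : X.Walk (γ ^ a • x₀) (γ' ^ b • x₀) :=
    (w.map (ghom hequiv g₀⁻¹)).copy he1 he2 with hw1def
  have hw1 : IsGeodesic X w1 := by
    rw [IsGeodesic, hw1def, SimpleGraph.Walk.length_copy, SimpleGraph.Walk.length_map]
    rw [IsGeodesic] at hw
    rw [hw, ← dist_smul hconn hequiv g₀ (γ ^ a • x₀) (γ' ^ b • x₀)]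
  have hv1 : g₀⁻¹ • v ∈ w1.support := by
    rw [hw1def, SimpleGraph.Walk.support_copy, SimpleGraph.Walk.support_map]
    exact List.mem_map_of_mem hv
  obtain ⟨u, hu_or, hu_d⟩ := (hμ a b w1 hw1).1 (g₀⁻¹ • v) hv1
  refine ⟨g₀ • u, ?_, ?_⟩
  · rcases hu_or with ⟨i, h1, h2, rfl⟩ | ⟨j, h1, h2, rfl⟩
    · exact Or.inl ⟨i, h1, h2, rfl⟩
    · exact Or.inr ⟨j, h1, h2, rfl⟩
  · have hds := dist_smul hconn hequiv g₀ (g₀⁻¹ • v) u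
    rw [smul_inv_smul] at hds
    calc (X.dist v (g₀ • u) : ℝ) = (X.dist (g₀⁻¹ • v) u : ℝ) := by rw [hds]
      _ ≤ μ := hu_d

lemma dist_through (hconn : X.Connected)
    {γ γ' : G} {x₀ : Y} {μ : ℝ}
    (hμ : ∀ (a b : ℤ) (w : X.Walk (γ ^ a • x₀) (γ' ^ b • x₀)), IsGeodesic X w →
      (∀ v ∈ w.support, ∃ u : Y,
        ((∃ i : ℤ, min 0 a ≤ i ∧ i ≤ max 0 a ∧ u = γ ^ i • x₀) ∨
          (∃ j : ℤ, min 0 b ≤ j ∧ j ≤ max 0 b ∧ u = γ' ^ j • x₀)) ∧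
        (X.dist v u : ℝ) ≤ μ) ∧
      (∀ u : Y,
        ((∃ i : ℤ, min 0 a ≤ i ∧ i ≤ max 0 a ∧ u = γ ^ i • x₀) ∨
          (∃ j : ℤ, min 0 b ≤ j ∧ j ≤ max 0 b ∧ u = γ' ^ j • x₀)) →
        ∃ v ∈ w.support, (X.dist v u : ℝ) ≤ μ))
    (a b : ℤ) :
    (X.dist x₀ (γ ^ a • x₀) : ℝ) + (X.dist x₀ (γ' ^ b • x₀) : ℝ) ≤
      (X.dist (γ ^ a • x₀) (γ' ^ b • x₀) : ℝ) + 2*μ := by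
  classical
  obtain ⟨w, hw⟩ := exists_geodesic hconn (γ ^ a • x₀) (γ' ^ b • x₀)
  have hx0 : ∃ i : ℤ, min 0 a ≤ i ∧ i ≤ max 0 a ∧ x₀ = γ ^ i • x₀ := by
    exact ⟨0, min_le_left 0 a, le_max_left 0 a, by simp⟩
  obtain ⟨v, hv, hdv⟩ := (hμ a b w hw).2 x₀ (Or.inl hx0)
  have hsplit : w.length = (w.takeUntil v hv).length + (w.dropUntil v hv).length := by
    conv_lhs => rw [← SimpleGraph.Walk.take_spec w hv]
    rw [SimpleGraph.Walk.length_append]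
  have h1 : X.dist (γ ^ a • x₀) v ≤ (w.takeUntil v hv).length := SimpleGraph.dist_le _
  have h2 : X.dist v (γ' ^ b • x₀) ≤ (w.dropUntil v hv).length := SimpleGraph.dist_le _
  have t1 := dist_tri_real hconn x₀ v (γ ^ a • x₀)
  have t2 := dist_tri_real hconn x₀ v (γ' ^ b • x₀)
  have hvx : (X.dist x₀ v : ℝ) = (X.dist v x₀ : ℝ) := by
    rw [SimpleGraph.dist_comm]
  have hda : (X.dist v (γ ^ a • x₀) : ℝ) = (X.dist (γ ^ a • x₀) v : ℝ) := by
    rw [SimpleGraph.dist_comm]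
  rw [IsGeodesic] at hw
  have h1' : (X.dist (γ ^ a • x₀) v : ℝ) ≤ ((w.takeUntil v hv).length : ℝ) := by exact_mod_cast h1
  have h2' : (X.dist v (γ' ^ b • x₀) : ℝ) ≤ ((w.dropUntil v hv).length : ℝ) := by exact_mod_cast h2
  have hsplit' : ((w.takeUntil v hv).length : ℝ) + ((w.dropUntil v hv).length : ℝ)
      = (X.dist (γ ^ a • x₀) (γ' ^ b • x₀) : ℝ) := by
    rw [← hw]
    exact_mod_cast hsplit.symm
  linarith

/-- BGIT contrapositive: if every geodesic between nearby-to-hug endpoints keeps distance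
from `s`, the projection is at most `C`. -/
lemma avoid_core {S : CPS G Y m} {C : ℝ} (hconn : X.Connected)
    {δ : ℝ} (hslim : SlimTriangles X δ) (hδ : 0 ≤ δ)
    (hbgit : BGIT S X C) {μ D : ℝ} (hμ0 : 0 ≤ μ) (hD : 0 ≤ D)
    {s p q o₁ o₂ : Y} (HUG : Set Y)
    (hcp : S.col p = S.col s) (hcq : S.col q = S.col s) (hps : p ≠ s) (hqs : q ≠ s)
    (hpo : (X.dist p o₁ : ℝ) ≤ D) (hqo : (X.dist q o₂ : ℝ) ≤ D)
    (hhug : ∀ (w : X.Walk o₁ o₂), IsGeodesic X w →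
      ∀ v ∈ w.support, ∃ h ∈ HUG, (X.dist v h : ℝ) ≤ μ)
    (hfar : ∀ h ∈ HUG, μ + 2*δ + 2*D + 2 ≤ (X.dist s h : ℝ)) :
    S.dmod s p q ≤ C := by
  by_contra hlt
  push_neg at hlt
  obtain ⟨wo, hwo⟩ := exists_geodesic hconn o₁ o₂
  obtain ⟨wpq, hwpq⟩ := exists_geodesic hconn p q
  obtain ⟨v, hv, hdv⟩ := hbgit s p q hcp hcq hps hqs hlt wpq hwpq
  have hqo' : (X.dist o₂ q : ℝ) ≤ D := by rw [SimpleGraph.dist_comm]; exact hqo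
  obtain ⟨c, hc, hdc⟩ := transport hconn hslim hδ hD hD hpo hqo' wpq hwpq wo hwo v hv
  obtain ⟨h, hh, hdh⟩ := hhug wo hwo c hc
  have t1 := dist_tri_real hconn s v h
  have t2 := dist_tri_real hconn v c h
  have hfar' := hfar h hh
  have hsv : (X.dist s v : ℝ) = 1 := by
    rw [SimpleGraph.dist_comm, hdv]
    norm_num
  linarith

end Hug

section Helpers

variable {S : CPS G Y m} (R : CRF S)

lemma stab_finite (x u : Y) (hAct : u ∈ S.Act x) (hux : u ≠ x) :
    {δ : G | δ ∈ R.Γ x ∧ δ • u = u}.Finite := by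
  have hfin := R.proper_isotropy (S.dang x u u + 1) x u hAct hux
  refine hfin.subset ?_
  rintro δ ⟨hm, he⟩
  exact ⟨hm, by rw [he]; linarith⟩

lemma finset_pair_bound {X : SimpleGraph Y} {C : ℝ} (hbgit : BGIT S X C) (hfix : FixNbrs R X)
    (htrans : R.Transfer) (F : Finset (Y × Y)) :
    ∃ A : ℝ, 0 ≤ A ∧ ∀ pq ∈ F, ∀ s, S.Dfnd s pq.1 pq.2 → S.dang s pq.1 pq.2 ≤ A := by
  classical
  induction F using Finset.induction_on with
  | empty => exact ⟨0, le_refl _, by simp⟩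
  | @insert pq F' _ ih =>
    obtain ⟨A, hA0, hA⟩ := ih
    obtain ⟨B, hB⟩ := pair_bound R hbgit hfix htrans pq.1 pq.2
    refine ⟨max A (max B 0), le_trans hA0 (le_max_left _ _), ?_⟩
    intro pq' hpq' s hs
    rcases Finset.mem_insert.1 hpq' with h | h
    · subst h
      exact le_trans (hB s hs) (le_trans (le_max_left _ _) (le_max_right _ _))
    · exact le_trans (hA pq' h s hs) (le_max_left _ _)

lemma proxy_use {x' : Y} {i : Fin m} {xt : Y} (ht : R.IsTransferPt x' i xt) (g : G) (s : Y)
    (hcol : S.col (g • xt) = S.col s) (hsx : s ∈ S.Act (g • x')) (hxs : g • x' ≠ s)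
    (hus : g • xt ≠ s) :
    S.dpi s (g • x') (g • xt) ≤ S.Th0 + 3 * S.kappa + 2 * S.theta := by
  obtain ⟨hI, hII⟩ := transported_clauses R ht g s hcol hsx hxs
  exact proxy_bound R hcol ((S.act_symm _ _).2 hsx) hxs hus hI hII

lemma dpi_piece {s p q : Y} (hcp : S.col p = S.col s) (hcq : S.col q = S.col s)
    (hps : p ≠ s) (hqs : q ≠ s) {C' : ℝ} (hC' : 0 ≤ C')
    (hd : p ≠ q → S.dmod s p q ≤ C') : S.dpi s p q ≤ C' + S.kappa + S.theta := by
  have hp : p ∈ S.Act s := S.act_piece p s hcp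
  have hκ := S.kappa_pos
  have hθ := S.theta_pos
  by_cases hpq : p = q
  · subst hpq
    have := S.separation s p hp hps
    linarith
  · have h1 := (S.dmod_le_dpi s p q hcp hcq hps hqs hpq).1
    have h2 := hd hpq
    linarith

end Helpers

section GraphHelpers

variable {X : SimpleGraph Y}

lemma dist_pos_ne {p q : Y} (h : (0:ℝ) < (X.dist p q : ℝ)) : p ≠ q := by
  intro he
  subst he
  rw [SimpleGraph.dist_self] at h
  norm_num at h

lemma lox_sep (hconn : X.Connected) (hequiv : GraphEquiv G X) {g : G} {x₀ : Y} {lam : ℝ}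
    (hlox : ∀ n : ℤ, lam * |(n : ℝ)| ≤ (X.dist x₀ (g ^ n • x₀) : ℝ)) (p q : ℤ) :
    lam * |((p - q : ℤ) : ℝ)| ≤ (X.dist (g ^ p • x₀) (g ^ q • x₀) : ℝ) := by
  have h := hlox (p - q)
  have h2 : X.dist x₀ (g ^ (p - q) • x₀) = X.dist (g ^ q • x₀) (g ^ p • x₀) := by
    rw [← dist_smul hconn hequiv (g ^ q) x₀ (g ^ (p - q) • x₀), zsmul_comp]
    have he : q + (p - q) = p := by omega
    rw [he]
  rw [h2, SimpleGraph.dist_comm] at h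
  exact h

lemma orbit_step (hconn : X.Connected) (hequiv : GraphEquiv G X) (g : G) (x₀ : Y) (t : ℤ) :
    (X.dist x₀ (g ^ t • x₀) : ℝ) ≤ |(t : ℝ)| * (X.dist x₀ (g • x₀) : ℝ) := by
  induction t using Int.induction_on with
  | zero => simp
  | succ n ih =>
    have htr := dist_tri_real hconn x₀ (g ^ (n:ℤ) • x₀) (g ^ ((n:ℤ)+1) • x₀)
    have hstep : (X.dist (g ^ (n:ℤ) • x₀) (g ^ ((n:ℤ)+1) • x₀) : ℝ) = (X.dist x₀ (g • x₀) : ℝ) := by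
      have he : g ^ ((n:ℤ)+1) • x₀ = g ^ (n:ℤ) • (g • x₀) := by
        rw [smul_smul, ← zpow_add_one]
      rw [he, dist_smul hconn hequiv (g ^ (n:ℤ)) x₀ (g • x₀)]
    have habs1 : |((n:ℤ) : ℝ)| = (n : ℝ) := abs_of_nonneg (by positivity)
    have habs2 : |(((n:ℤ)+1 : ℤ) : ℝ)| = (n : ℝ) + 1 := by
      push_cast
      rw [abs_of_nonneg (by positivity)]
    rw [habs1] at ih
    have hd0 : (0:ℝ) ≤ (X.dist x₀ (g • x₀) : ℝ) := by positivity
    calc (X.dist x₀ (g ^ ((n:ℤ)+1) • x₀) : ℝ)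
        ≤ (X.dist x₀ (g ^ (n:ℤ) • x₀) : ℝ) + (X.dist x₀ (g • x₀) : ℝ) := by
          rw [← hstep]; exact htr
      _ ≤ (n : ℝ) * (X.dist x₀ (g • x₀) : ℝ) + (X.dist x₀ (g • x₀) : ℝ) := by linarith
      _ = |(((n:ℤ)+1 : ℤ) : ℝ)| * (X.dist x₀ (g • x₀) : ℝ) := by rw [habs2]; ring
  | pred n ih =>
    have htr := dist_tri_real hconn x₀ (g ^ (-(n:ℤ)) • x₀) (g ^ (-(n:ℤ)-1) • x₀)
    have hstep : (X.dist (g ^ (-(n:ℤ)) • x₀) (g ^ (-(n:ℤ)-1) • x₀) : ℝ)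
        = (X.dist x₀ (g • x₀) : ℝ) := by
      have he : g ^ (-(n:ℤ)) • x₀ = g ^ (-(n:ℤ)-1) • (g • x₀) := by
        rw [smul_smul, ← zpow_add_one]
        have he2 : (-(n:ℤ)-1)+1 = -(n:ℤ) := by ring
        rw [he2]
      rw [he, dist_smul hconn hequiv (g ^ (-(n:ℤ)-1)) (g • x₀) x₀, SimpleGraph.dist_comm]
    have habs1 : |((-(n:ℤ) : ℤ) : ℝ)| = (n : ℝ) := by
      push_cast
      rw [abs_neg, abs_of_nonneg (by positivity)]
    have habs2 : |((-(n:ℤ)-1 : ℤ) : ℝ)| = (n : ℝ) + 1 := by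
      push_cast
      rw [show (-(n:ℝ) - 1) = -((n:ℝ)+1) by ring, abs_neg, abs_of_nonneg (by positivity)]
    rw [habs1] at ih
    have hd0 : (0:ℝ) ≤ (X.dist x₀ (g • x₀) : ℝ) := by positivity
    calc (X.dist x₀ (g ^ (-(n:ℤ)-1) • x₀) : ℝ)
        ≤ (X.dist x₀ (g ^ (-(n:ℤ)) • x₀) : ℝ) + (X.dist x₀ (g • x₀) : ℝ) := by
          rw [← hstep]; exact htr
      _ ≤ (n : ℝ) * (X.dist x₀ (g • x₀) : ℝ) + (X.dist x₀ (g • x₀) : ℝ) := by linarith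
      _ = |((-(n:ℤ)-1 : ℤ) : ℝ)| * (X.dist x₀ (g • x₀) : ℝ) := by rw [habs2]; ring

end GraphHelpers

section Avoid

variable {X : SimpleGraph Y}

/-- The Hausdorff hypothesis on geodesics between the two orbits. -/
abbrev HMu (X : SimpleGraph Y) (γ γ' : G) (x₀ : Y) (μ : ℝ) : Prop :=
  ∀ (a b : ℤ) (w : X.Walk (γ ^ a • x₀) (γ' ^ b • x₀)), IsGeodesic X w →
      (∀ v ∈ w.support, ∃ u : Y,
        ((∃ i : ℤ, min 0 a ≤ i ∧ i ≤ max 0 a ∧ u = γ ^ i • x₀) ∨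
          (∃ j : ℤ, min 0 b ≤ j ∧ j ≤ max 0 b ∧ u = γ' ^ j • x₀)) ∧
        (X.dist v u : ℝ) ≤ μ) ∧
      (∀ u : Y,
        ((∃ i : ℤ, min 0 a ≤ i ∧ i ≤ max 0 a ∧ u = γ ^ i • x₀) ∨
          (∃ j : ℤ, min 0 b ≤ j ∧ j ≤ max 0 b ∧ u = γ' ^ j • x₀)) →
        ∃ v ∈ w.support, (X.dist v u : ℝ) ≤ μ)

variable {S : CPS G Y m}

lemma avoid_gamma {C δ μ D : ℝ} (hconn : X.Connected) (hslim : SlimTriangles X δ) (hδ : 0 ≤ δ)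
    (hequiv : GraphEquiv G X) (hbgit : BGIT S X C) (hμ0 : 0 ≤ μ) (hD : 0 ≤ D)
    {γ γ' : G} {x₀ : Y} (hμ : HMu X γ γ' x₀ μ)
    (r₁ r₂ : ℤ) {s p q : Y}
    (hcp : S.col p = S.col s) (hcq : S.col q = S.col s) (hps : p ≠ s) (hqs : q ≠ s)
    (hp : (X.dist p (γ ^ r₁ • x₀) : ℝ) ≤ D) (hq : (X.dist q (γ ^ r₂ • x₀) : ℝ) ≤ D)
    (cert : ∀ t : ℤ, min r₁ r₂ ≤ t → t ≤ max r₁ r₂ →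
      μ + 2*δ + 2*D + 2 ≤ (X.dist s (γ ^ t • x₀) : ℝ)) :
    S.dmod s p q ≤ C := by
  have he₁ : (γ ^ r₂ : G) • (γ ^ (r₁ - r₂) • x₀) = γ ^ r₁ • x₀ := by
    rw [zsmul_comp]
    have h : r₂ + (r₁ - r₂) = r₁ := by omega
    rw [h]
  have he₂ : (γ' ^ (0:ℤ)) • x₀ = x₀ := by simp
  have hpo : (X.dist p ((γ ^ r₂ : G) • (γ ^ (r₁ - r₂) • x₀)) : ℝ) ≤ D := by rw [he₁]; exact hp
  have hqo : (X.dist q ((γ ^ r₂ : G) • ((γ' ^ (0:ℤ)) • x₀)) : ℝ) ≤ D := by rw [he₂]; exact hq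
  have hfar : ∀ h ∈ Hug γ γ' x₀ (γ ^ r₂) (r₁ - r₂) 0,
      μ + 2*δ + 2*D + 2 ≤ (X.dist s h : ℝ) := by
    rintro h (⟨lh, hl1, hl2, rfl⟩ | ⟨lh, hl1, hl2, rfl⟩)
    · rw [zsmul_comp]
      exact cert (r₂ + lh) (by omega) (by omega)
    · have h0 : lh = 0 := by omega
      subst h0
      rw [he₂]
      exact cert r₂ (by omega) (by omega)
  exact avoid_core hconn hslim hδ hbgit hμ0 hD _ hcp hcq hps hqs hpo hqo
    (hug_spec hconn hequiv hμ (γ ^ r₂) (r₁ - r₂) 0) hfar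

lemma avoid_gamma' {C δ μ D : ℝ} (hconn : X.Connected) (hslim : SlimTriangles X δ) (hδ : 0 ≤ δ)
    (hequiv : GraphEquiv G X) (hbgit : BGIT S X C) (hμ0 : 0 ≤ μ) (hD : 0 ≤ D)
    {γ γ' : G} {x₀ : Y} (hμ : HMu X γ γ' x₀ μ)
    (r₁ r₂ : ℤ) {s p q : Y}
    (hcp : S.col p = S.col s) (hcq : S.col q = S.col s) (hps : p ≠ s) (hqs : q ≠ s)
    (hp : (X.dist p (γ' ^ r₁ • x₀) : ℝ) ≤ D) (hq : (X.dist q (γ' ^ r₂ • x₀) : ℝ) ≤ D)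
    (cert : ∀ t : ℤ, min r₁ r₂ ≤ t → t ≤ max r₁ r₂ →
      μ + 2*δ + 2*D + 2 ≤ (X.dist s (γ' ^ t • x₀) : ℝ)) :
    S.dmod s p q ≤ C := by
  have he₁ : (γ ^ (0:ℤ)) • x₀ = x₀ := by simp
  have he₂ : (γ' ^ r₁ : G) • (γ' ^ (r₂ - r₁) • x₀) = γ' ^ r₂ • x₀ := by
    rw [zsmul_comp]
    have h : r₁ + (r₂ - r₁) = r₂ := by omega
    rw [h]
  have hpo : (X.dist p ((γ' ^ r₁ : G) • ((γ ^ (0:ℤ)) • x₀)) : ℝ) ≤ D := by rw [he₁]; exact hp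
  have hqo : (X.dist q ((γ' ^ r₁ : G) • (γ' ^ (r₂ - r₁) • x₀)) : ℝ) ≤ D := by rw [he₂]; exact hq
  have hfar : ∀ h ∈ Hug γ γ' x₀ (γ' ^ r₁) (0:ℤ) (r₂ - r₁),
      μ + 2*δ + 2*D + 2 ≤ (X.dist s h : ℝ) := by
    rintro h (⟨lh, hl1, hl2, rfl⟩ | ⟨lh, hl1, hl2, rfl⟩)
    · have h0 : lh = 0 := by omega
      subst h0
      rw [he₁]
      exact cert r₁ (by omega) (by omega)
    · rw [zsmul_comp]
      exact cert (r₁ + lh) (by omega) (by omega)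
  exact avoid_core hconn hslim hδ hbgit hμ0 hD _ hcp hcq hps hqs hpo hqo
    (hug_spec hconn hequiv hμ (γ' ^ r₁) (0:ℤ) (r₂ - r₁)) hfar

lemma avoid_mixed {C δ μ D : ℝ} (hconn : X.Connected) (hslim : SlimTriangles X δ) (hδ : 0 ≤ δ)
    (hequiv : GraphEquiv G X) (hbgit : BGIT S X C) (hμ0 : 0 ≤ μ) (hD : 0 ≤ D)
    {γ γ' : G} {x₀ : Y} (hμ : HMu X γ γ' x₀ μ)
    (r r' : ℤ) {s p q : Y}
    (hcp : S.col p = S.col s) (hcq : S.col q = S.col s) (hps : p ≠ s) (hqs : q ≠ s)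
    (hp : (X.dist p (γ ^ r • x₀) : ℝ) ≤ D) (hq : (X.dist q (γ' ^ r' • x₀) : ℝ) ≤ D)
    (certg : ∀ t : ℤ, min 0 r ≤ t → t ≤ max 0 r →
      μ + 2*δ + 2*D + 2 ≤ (X.dist s (γ ^ t • x₀) : ℝ))
    (certg' : ∀ t : ℤ, min 0 r' ≤ t → t ≤ max 0 r' →
      μ + 2*δ + 2*D + 2 ≤ (X.dist s (γ' ^ t • x₀) : ℝ)) :
    S.dmod s p q ≤ C := by
  have hpo : (X.dist p ((1 : G) • (γ ^ r • x₀)) : ℝ) ≤ D := by rw [one_smul]; exact hp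
  have hqo : (X.dist q ((1 : G) • (γ' ^ r' • x₀)) : ℝ) ≤ D := by rw [one_smul]; exact hq
  have hfar : ∀ h ∈ Hug γ γ' x₀ (1 : G) r r',
      μ + 2*δ + 2*D + 2 ≤ (X.dist s h : ℝ) := by
    rintro h (⟨lh, hl1, hl2, rfl⟩ | ⟨lh, hl1, hl2, rfl⟩)
    · rw [one_smul]
      exact certg lh hl1 hl2
    · rw [one_smul]
      exact certg' lh hl1 hl2
  exact avoid_core hconn hslim hδ hbgit hμ0 hD _ hcp hcq hps hqs hpo hqo
    (hug_spec hconn hequiv hμ (1 : G) r r') hfar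

end Avoid

omit [Group G] in
lemma abs_ge_of_int {k : ℕ} {x : ℤ} (h : (k:ℤ) ≤ x ∨ x ≤ -(k:ℤ)) : (k:ℝ) ≤ |(x:ℝ)| := by
  rcases h with h | h
  · exact le_trans (by exact_mod_cast h) (le_abs_self _)
  · have h1 : (k:ℝ) ≤ -(x:ℝ) := by exact_mod_cast (by linarith : (k:ℤ) ≤ -x)
    exact le_trans h1 (neg_le_abs _)

omit [Group G] in
lemma abs_le_of_int {k : ℕ} {x : ℤ} (h1 : -(k:ℤ) ≤ x) (h2 : x ≤ (k:ℤ)) : |(x:ℝ)| ≤ (k:ℝ) := by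
  rw [abs_le]
  constructor
  · exact_mod_cast h1
  · exact_mod_cast h2

lemma dang_translate {S : CPS G Y m} (g₀ : G) {s p q : Y} (hDf : S.Dfnd s (g₀ • p) (g₀ • q)) :
    S.dang s (g₀ • p) (g₀ • q) = S.dang (g₀⁻¹ • s) p q ∧ S.Dfnd (g₀⁻¹ • s) p q := by
  have hDf' := Dfnd_smul S g₀⁻¹ hDf
  simp only [inv_smul_smul] at hDf'
  refine ⟨?_, hDf'⟩
  have := dang_smul S g₀ (g₀⁻¹ • s) p q hDf'.1 hDf'.2.1 hDf'.2.2.1 hDf'.2.2.2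
  rw [smul_inv_smul] at this
  exact this

end BPaux
set_option maxHeartbeats 4000000 in
/-- Bounded projections between two loxodromic orbits (claim in the proof of
Theorem 3.1). -/
theorem bounded_projections_between_loxodromic_orbits
    {G Y : Type} [Group G] [MulAction G Y] {m : ℕ}
    (S : CPS G Y m) (R : CRF S) (X : SimpleGraph Y) (δ C : ℝ)
    (hδ : 0 ≤ δ) (hC : 0 < C)
    (hconn : X.Connected)
    (hslim : SlimTriangles X δ)
    (hequiv : GraphEquiv G X)
    (hbgit : BGIT S X C)
    (hfix : FixNbrs R X)
    (htrans : R.Transfer)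
    (γ γ' : G) (x₀ : Y) (lam lam' : ℝ) (hlam : 0 < lam) (hlam' : 0 < lam')
    (hlox : ∀ n : ℤ, lam * |(n : ℝ)| ≤ (X.dist x₀ (γ ^ n • x₀) : ℝ))
    (hlox' : ∀ n : ℤ, lam' * |(n : ℝ)| ≤ (X.dist x₀ (γ' ^ n • x₀) : ℝ))
    (μ : ℝ) (hμ0 : 0 ≤ μ)
    (hμ : ∀ (a b : ℤ) (w : X.Walk (γ ^ a • x₀) (γ' ^ b • x₀)), IsGeodesic X w →
      (∀ v ∈ w.support, ∃ u : Y,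
        ((∃ i : ℤ, min 0 a ≤ i ∧ i ≤ max 0 a ∧ u = γ ^ i • x₀) ∨
          (∃ j : ℤ, min 0 b ≤ j ∧ j ≤ max 0 b ∧ u = γ' ^ j • x₀)) ∧
        (X.dist v u : ℝ) ≤ μ) ∧
      (∀ u : Y,
        ((∃ i : ℤ, min 0 a ≤ i ∧ i ≤ max 0 a ∧ u = γ ^ i • x₀) ∨
          (∃ j : ℤ, min 0 b ≤ j ∧ j ≤ max 0 b ∧ u = γ' ^ j • x₀)) →
        ∃ v ∈ w.support, (X.dist v u : ℝ) ≤ μ)) :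
    ∃ L : ℝ, ∀ (a b : ℤ) (s : Y), S.Dfnd s (γ ^ a • x₀) (γ' ^ b • x₀) →
      S.dang s (γ ^ a • x₀) (γ' ^ b • x₀) ≤ L := by
  classical
  have hθ : (0:ℝ) < S.theta := S.theta_pos
  have hκ : (0:ℝ) < S.kappa := S.kappa_pos
  have hT0 : (0:ℝ) ≤ S.Th0 := BPaux.Th0_nonneg (S := S)
  -- seed systems
  choose XT hXT using htrans x₀
  have hE : ∀ i : Fin m, ∃ e : Y, S.col e = i ∧ (∃ δ' ∈ R.Γ x₀, e = δ' • XT i) ∧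
      (XT i ∈ S.Act x₀ → XT i ≠ x₀ → e ≠ XT i) := by
    intro i
    by_cases hAct : XT i ∈ S.Act x₀
    · by_cases hx0 : XT i = x₀
      · exact ⟨XT i, (hXT i).1, ⟨1, one_mem _, (one_smul _ _).symm⟩, fun _ h => absurd hx0 h⟩
      · have hSig := BPaux.sigma_infinite R x₀ (XT i) i (hXT i).1
        have hstab := BPaux.stab_finite R x₀ (XT i) hAct hx0
        obtain ⟨δ', ⟨hδm, hδc⟩, hδn⟩ := (hSig.diff hstab).nonempty
        refine ⟨δ' • XT i, hδc, ⟨δ', hδm, rfl⟩, fun _ _ he => ?_⟩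
        exact hδn ⟨hδm, he⟩
    · exact ⟨XT i, (hXT i).1, ⟨1, one_mem _, (one_smul _ _).symm⟩, fun h => absurd h hAct⟩
  choose E hEcol hEδ hEne using hE
  set seeds : Finset Y := (Finset.univ.image XT) ∪ (Finset.univ.image E) with hseeds_def
  have hXTseeds : ∀ i, XT i ∈ seeds := fun i =>
    Finset.mem_union_left _ (Finset.mem_image_of_mem _ (Finset.mem_univ i))
  have hEseeds : ∀ i, E i ∈ seeds := fun i =>
    Finset.mem_union_right _ (Finset.mem_image_of_mem _ (Finset.mem_univ i))
  -- the constant D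
  obtain ⟨D₀, hD₀⟩ := Finset.exists_le (seeds.image fun e => (X.dist x₀ e : ℝ))
  set D : ℝ := max D₀ 0 with hD_def
  have hD0 : (0:ℝ) ≤ D := le_max_right _ _
  have hDseed : ∀ e ∈ seeds, (X.dist x₀ e : ℝ) ≤ D := fun e he =>
    le_trans (hD₀ _ (Finset.mem_image_of_mem _ he)) (le_max_left _ _)
  set Kp : ℝ := S.Th0 + 3 * S.kappa + 2 * S.theta with hKp_def
  have hKp0 : (0:ℝ) ≤ Kp := by rw [hKp_def]; linarith
  set FARv : ℝ := μ + 2*δ + 2*D + 2 with hFARv_def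
  set R₀ : ℝ := 1 + (2*δ + 2*D) + μ with hR₀_def
  have hR₀0 : (0:ℝ) ≤ R₀ := by rw [hR₀_def]; linarith
  set c1 : ℝ := max (X.dist x₀ (γ • x₀) : ℝ) (X.dist x₀ (γ' • x₀) : ℝ) with hc1_def
  have hc10 : (0:ℝ) ≤ c1 := le_trans (by positivity) (le_max_left _ _)
  obtain ⟨k, hk⟩ := exists_nat_ge (max ((FARv + R₀ + 2*μ)/lam) ((FARv + R₀ + 2*μ)/lam'))
  have hkγ : FARv + R₀ + 2*μ ≤ lam * k := by
    have h1 : (FARv + R₀ + 2*μ)/lam ≤ (k:ℝ) := le_trans (le_max_left _ _) hk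
    rw [div_le_iff₀ hlam] at h1
    linarith
  have hkγ' : FARv + R₀ + 2*μ ≤ lam' * k := by
    have h1 : (FARv + R₀ + 2*μ)/lam' ≤ (k:ℝ) := le_trans (le_max_right _ _) hk
    rw [div_le_iff₀ hlam'] at h1
    linarith
  set R₁ : ℝ := R₀ + (k:ℝ) * c1 with hR₁_def
  obtain ⟨k₂, hk₂⟩ := exists_nat_ge (max ((FARv + R₁)/lam) ((FARv + R₁)/lam'))
  have hk₂γ : FARv + R₁ ≤ lam * k₂ := by
    have h1 : (FARv + R₁)/lam ≤ (k₂:ℝ) := le_trans (le_max_left _ _) hk₂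
    rw [div_le_iff₀ hlam] at h1
    linarith
  have hk₂γ' : FARv + R₁ ≤ lam' * k₂ := by
    have h1 : (FARv + R₁)/lam' ≤ (k₂:ℝ) := le_trans (le_max_right _ _) hk₂
    rw [div_le_iff₀ hlam'] at h1
    linarith
  set N : ℤ := 2*(k:ℤ) + (k₂:ℤ) + 2 with hN_def
  set F : Finset (Y × Y) := ((Finset.Icc (-N) N ×ˢ Finset.Icc (-N) N) ×ˢ (seeds ×ˢ seeds)).image
      (fun q => (γ ^ q.1.1 • q.2.1, γ' ^ q.1.2 • q.2.2)) with hF_def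
  obtain ⟨A, hA0, hA⟩ := BPaux.finset_pair_bound R hbgit hfix htrans F
  have hseed : ∀ (g₀ : G) (r r' : ℤ), -N ≤ r → r ≤ N → -N ≤ r' → r' ≤ N →
      ∀ e ∈ seeds, ∀ e' ∈ seeds, ∀ s : Y,
      S.Dfnd s (g₀ • (γ ^ r • e)) (g₀ • (γ' ^ r' • e')) →
      S.dang s (g₀ • (γ ^ r • e)) (g₀ • (γ' ^ r' • e')) ≤ A := by
    intro g₀ r r' hr1 hr2 hr1' hr2' e he e' he' s hDf
    obtain ⟨hval, hDf'⟩ := BPaux.dang_translate g₀ hDf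
    rw [hval]
    refine hA (γ ^ r • e, γ' ^ r' • e') ?_ _ hDf'
    rw [hF_def]
    refine Finset.mem_image.2 ⟨((r, r'), (e, e')), ?_, rfl⟩
    simp only [Finset.mem_product, Finset.mem_Icc]
    exact ⟨⟨⟨hr1, hr2⟩, hr1', hr2'⟩, he, he'⟩
  set PB : ℝ := max C A + S.kappa + S.theta with hPB_def
  have hCA0 : (0:ℝ) ≤ max C A := le_trans hC.le (le_max_left C A)
  have hPB0 : (0:ℝ) ≤ PB := by rw [hPB_def]; linarith
  refine ⟨max (max C S.theta) (2*Kp + 2*(S.kappa + S.theta) + 3*PB), ?_⟩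
  intro a b s hDf
  obtain ⟨hx1, hz1, hx2, hz2⟩ := hDf
  by_cases hxz : γ ^ a • x₀ = γ' ^ b • x₀
  · refine le_trans ?_ (le_max_left _ _)
    rw [← hxz]
    by_cases hcol : S.col (γ ^ a • x₀) = S.col s
    · rw [BPaux.dang_eq_dmod S hcol hcol]
      exact le_trans (BPaux.dmod_self_le R hbgit hfix s _ hcol hx2) (le_max_left _ _)
    · rw [BPaux.dang_eq_dpi S (fun h => hcol h.1)]
      exact le_trans (le_of_lt (S.separation s _ hx1 hx2)) (le_max_right _ _)
  -- proxy choice (both sides)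
  have hproxy : ∀ gg : G, (gg • x₀) ∈ S.Act s → gg • x₀ ≠ s →
      ∃ e ∈ seeds, S.col (gg • e) = S.col s ∧ gg • e ≠ s ∧
        S.dpi s (gg • x₀) (gg • e) ≤ Kp := by
    intro gg hgs hgn
    set i₁ := S.col (gg⁻¹ • s) with hi₁
    have hcol1 : S.col (gg • XT i₁) = S.col s := by
      have h1 := S.smul_col gg _ _ ((hXT i₁).1 : S.col (XT i₁) = i₁)
      rwa [smul_inv_smul] at h1
    by_cases hu1 : gg • XT i₁ = s
    · by_cases hAct : XT i₁ ∈ S.Act x₀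
      · by_cases hx0 : XT i₁ = x₀
        · exact absurd (by rw [← hx0, hu1] : gg • x₀ = s) hgn
        · obtain ⟨δ', hδm, hδe⟩ := hEδ i₁
          have hEn : E i₁ ≠ XT i₁ := hEne i₁ hAct hx0
          have hcolE : S.col (gg • E i₁) = S.col s := by
            have h1 := S.smul_col gg _ _ ((hEcol i₁) : S.col (E i₁) = i₁)
            rwa [smul_inv_smul] at h1
          have hne : gg • E i₁ ≠ s := by
            intro he
            exact hEn (smul_left_cancel gg (by rw [he, hu1]))
          refine ⟨E i₁, hEseeds i₁, hcolE, hne, ?_⟩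
          have hg1 : (gg * δ') • x₀ = gg • x₀ := by rw [mul_smul, R.stab x₀ δ' hδm]
          have hg2 : (gg * δ') • XT i₁ = gg • E i₁ := by rw [mul_smul, ← hδe]
          have hres := BPaux.proxy_use R (hXT i₁) (gg * δ') s (by rw [hg2]; exact hcolE)
            (by rw [hg1]; exact (S.act_symm _ _).1 hgs) (by rw [hg1]; exact hgn)
            (by rw [hg2]; exact hne)
          rw [hg1, hg2] at hres
          exact hres
      · exfalso
        have h1 : s ∈ S.Act (gg • x₀) := (S.act_symm _ _).1 hgs
        rw [← hu1] at h1
        exact hAct ((BPaux.smul_act_iff S gg _ _).1 h1)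
    · exact ⟨XT i₁, hXTseeds i₁, hcol1, hu1,
        BPaux.proxy_use R (hXT i₁) gg s hcol1 ((S.act_symm _ _).1 hgs) hgn hu1⟩
  obtain ⟨eu, heu, hucol, hune, hudpi⟩ := hproxy (γ ^ a) hx1 hx2
  obtain ⟨ew, hew, hwcol, hwne, hwdpi⟩ := hproxy (γ' ^ b) hz1 hz2
  set u : Y := (γ:G) ^ a • eu with hu_def
  set w : Y := (γ':G) ^ b • ew with hw_def
  have humem : u ∈ S.Act s := S.act_piece _ _ hucol
  have hwmem : w ∈ S.Act s := S.act_piece _ _ hwcol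
  have hudist : (X.dist u (γ ^ a • x₀) : ℝ) ≤ D := by
    rw [hu_def, BPaux.dist_smul hconn hequiv (γ^a) eu x₀, SimpleGraph.dist_comm]
    exact hDseed eu heu
  have hwdist : (X.dist w (γ' ^ b • x₀) : ℝ) ≤ D := by
    rw [hw_def, BPaux.dist_smul hconn hequiv (γ'^b) ew x₀, SimpleGraph.dist_comm]
    exact hDseed ew hew
  refine le_trans ?_ (le_max_right _ _)
  have htop : S.dang s (γ^a•x₀) (γ'^b•x₀) ≤ S.dpi s (γ^a•x₀) (γ'^b•x₀) :=
    BPaux.dang_le_dpi S hx1 hz1 hx2 hz2 hxz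
  have hch1 := S.dpi_tri s (γ^a•x₀) (γ'^b•x₀) u hx1 hz1 humem hx2 hz2 hune
  have hch2 := S.dpi_tri s u (γ'^b•x₀) w humem hz1 hwmem hune hz2 hwne
  have hsymw : S.dpi s w (γ'^b•x₀) = S.dpi s (γ'^b•x₀) w :=
    S.dpi_symm s w _ hwmem hz1 hwne hz2
  have hW : S.dpi s u w ≤ 3 * PB := by
    have piece_avoid : ∀ p q : Y, S.col p = S.col s → S.col q = S.col s → p ≠ s → q ≠ s →
        (p ≠ q → S.dmod s p q ≤ C) → S.dpi s p q ≤ PB := by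
      intro p q hcp hcq hps hqs hd
      rw [hPB_def]
      have h1 := BPaux.dpi_piece hcp hcq hps hqs hCA0
        (fun hne => le_trans (hd hne) (le_max_left _ _))
      linarith
    have piece_seed : ∀ p q : Y, S.col p = S.col s → S.col q = S.col s → p ≠ s → q ≠ s →
        S.dang s p q ≤ A → S.dpi s p q ≤ PB := by
      intro p q hcp hcq hps hqs hd
      have h1 := BPaux.dpi_le_dang_add S (S.act_piece p s hcp) (S.act_piece q s hcq) hps hqs
      rw [hPB_def]
      have h2 : A ≤ max C A := le_max_right _ _
      linarith
    have assemble3 : ∀ p₁ p₂ : Y, p₁ ∈ S.Act s → p₂ ∈ S.Act s → p₁ ≠ s → p₂ ≠ s →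
        S.dpi s u p₁ ≤ PB → S.dpi s p₁ p₂ ≤ PB → S.dpi s p₂ w ≤ PB →
        S.dpi s u w ≤ 3 * PB := by
      intro p₁ p₂ h1 h2 h3 h4 b1 b2 b3
      have t1 := S.dpi_tri s u w p₁ humem hwmem h1 hune hwne h3
      have t2 := S.dpi_tri s p₁ w p₂ h1 hwmem h2 h3 hwne h4
      linarith
    have assemble2 : ∀ p₁ : Y, p₁ ∈ S.Act s → p₁ ≠ s →
        S.dpi s u p₁ ≤ PB → S.dpi s p₁ w ≤ PB → S.dpi s u w ≤ 3 * PB := by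
      intro p₁ h1 h3 b1 b2
      have t1 := S.dpi_tri s u w p₁ humem hwmem h1 hune hwne h3
      linarith
    by_cases hsmall : S.dmod s u w ≤ C
    · have h1 := piece_avoid u w hucol hwcol hune hwne (fun _ => hsmall)
      linarith
    push_neg at hsmall
    have huw : u ≠ w := by
      intro he
      rw [← he] at hsmall
      exact absurd (BPaux.dmod_self_le R hbgit hfix s u hucol hune) (not_le.2 hsmall)
    obtain ⟨wuw, hwuw⟩ := BPaux.exists_geodesic hconn u w
    obtain ⟨v, hv, hvd⟩ := hbgit s u w hucol hwcol hune hwne hsmall wuw hwuw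
    obtain ⟨w₀, hw₀⟩ := BPaux.exists_geodesic hconn (γ^a • x₀) (γ'^b • x₀)
    have hq' : (X.dist (γ'^b • x₀) w : ℝ) ≤ D := by
      rw [SimpleGraph.dist_comm]; exact hwdist
    obtain ⟨c, hc, hcd⟩ := BPaux.transport hconn hslim hδ hD0 hD0 hudist hq' wuw hwuw w₀ hw₀ v hv
    obtain ⟨o, ho_or, hod⟩ := (hμ a b w₀ hw₀).1 c hc
    have hso0 : (X.dist s o : ℝ) ≤ R₀ := by
      have t1 := BPaux.dist_tri_real hconn s v o
      have t2 := BPaux.dist_tri_real hconn v c o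
      have hsv : (X.dist s v : ℝ) = 1 := by rw [SimpleGraph.dist_comm, hvd]; norm_num
      rw [hR₀_def]
      linarith
    -- general seed-point facts
    have hCgcol : ∀ t : ℤ, S.col ((γ:G)^t • XT (S.col (((γ:G)^t)⁻¹ • s))) = S.col s := by
      intro t
      have h1 := S.smul_col ((γ:G)^t) _ _ ((hXT (S.col (((γ:G)^t)⁻¹ • s))).1)
      rwa [smul_inv_smul] at h1
    have hCg'col : ∀ t : ℤ, S.col ((γ':G)^t • XT (S.col (((γ':G)^t)⁻¹ • s))) = S.col s := by
      intro t
      have h1 := S.smul_col ((γ':G)^t) _ _ ((hXT (S.col (((γ':G)^t)⁻¹ • s))).1)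
      rwa [smul_inv_smul] at h1
    have hCgdist : ∀ t : ℤ,
        (X.dist ((γ:G)^t • XT (S.col (((γ:G)^t)⁻¹ • s))) ((γ:G)^t • x₀) : ℝ) ≤ D := by
      intro t
      rw [BPaux.dist_smul hconn hequiv, SimpleGraph.dist_comm]
      exact hDseed _ (hXTseeds _)
    have hCg'dist : ∀ t : ℤ,
        (X.dist ((γ':G)^t • XT (S.col (((γ':G)^t)⁻¹ • s))) ((γ':G)^t • x₀) : ℝ) ≤ D := by
      intro t
      rw [BPaux.dist_smul hconn hequiv, SimpleGraph.dist_comm]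
      exact hDseed _ (hXTseeds _)
    have hne_far : ∀ (p o' : Y), (X.dist p o' : ℝ) ≤ D →
        μ + 2*δ + 2*D + 2 ≤ (X.dist s o' : ℝ) → p ≠ s := by
      intro p o' h1 h2 he
      subst he
      have t1 := BPaux.dist_tri_real hconn p p o'
      rw [SimpleGraph.dist_self] at t1
      linarith
    -- certificates that only need `dist s x₀ ≤ R₁`
    have certC : (X.dist s x₀ : ℝ) ≤ R₁ → ∀ t : ℤ, ((k₂:ℤ) ≤ t ∨ t ≤ -(k₂:ℤ)) →
        μ + 2*δ + 2*D + 2 ≤ (X.dist s (γ^t • x₀) : ℝ) := by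
      intro hsx0 t ht
      have h1 := hlox t
      have h2 : (k₂:ℝ) ≤ |(t:ℝ)| := BPaux.abs_ge_of_int ht
      have h4 : lam * (k₂:ℝ) ≤ lam * |(t:ℝ)| := mul_le_mul_of_nonneg_left h2 hlam.le
      have h5 := BPaux.dist_tri_real hconn x₀ s (γ^t • x₀)
      have h6 : (X.dist x₀ s : ℝ) = (X.dist s x₀ : ℝ) := by rw [SimpleGraph.dist_comm]
      have h7 : FARv + R₁ ≤ lam * k₂ := hk₂γ
      rw [hFARv_def] at h7
      linarith
    have certD : (X.dist s x₀ : ℝ) ≤ R₁ → ∀ t : ℤ, ((k₂:ℤ) ≤ t ∨ t ≤ -(k₂:ℤ)) →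
        μ + 2*δ + 2*D + 2 ≤ (X.dist s (γ'^t • x₀) : ℝ) := by
      intro hsx0 t ht
      have h1 := hlox' t
      have h2 : (k₂:ℝ) ≤ |(t:ℝ)| := BPaux.abs_ge_of_int ht
      have h4 : lam' * (k₂:ℝ) ≤ lam' * |(t:ℝ)| := mul_le_mul_of_nonneg_left h2 hlam'.le
      have h5 := BPaux.dist_tri_real hconn x₀ s (γ'^t • x₀)
      have h6 : (X.dist x₀ s : ℝ) = (X.dist s x₀ : ℝ) := by rw [SimpleGraph.dist_comm]
      have h7 : FARv + R₁ ≤ lam' * k₂ := hk₂γ'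
      rw [hFARv_def] at h7
      linarith
    rcases ho_or with ⟨l, hl1, hl2, ho⟩ | ⟨l', hl1, hl2, ho⟩
    · -- the near orbit point is on the γ side
      subst ho
      have certA : ∀ t : ℤ, ((k:ℤ) ≤ t - l ∨ t - l ≤ -(k:ℤ)) →
          μ + 2*δ + 2*D + 2 ≤ (X.dist s (γ^t • x₀) : ℝ) := by
        intro t ht
        have h1 := BPaux.lox_sep hconn hequiv hlox t l
        have h2 : (k:ℝ) ≤ |((t - l : ℤ) : ℝ)| := BPaux.abs_ge_of_int ht
        have h4 : lam * (k:ℝ) ≤ lam * |((t-l:ℤ):ℝ)| := mul_le_mul_of_nonneg_left h2 hlam.le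
        have h5 := BPaux.dist_tri_real hconn (γ^t • x₀) s (γ^l • x₀)
        have h6 : (X.dist (γ^t • x₀) s : ℝ) = (X.dist s (γ^t • x₀) : ℝ) := by
          rw [SimpleGraph.dist_comm]
        have h7 : FARv + R₀ + 2*μ ≤ lam * k := hkγ
        rw [hFARv_def] at h7
        linarith
      have certB : ((k:ℤ) ≤ l ∨ l ≤ -(k:ℤ)) → ∀ t : ℤ,
          μ + 2*δ + 2*D + 2 ≤ (X.dist s (γ'^t • x₀) : ℝ) := by
        intro hlk t
        have h1 := BPaux.dist_through hconn hμ l t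
        have h2 := hlox l
        have h3 : (k:ℝ) ≤ |(l:ℝ)| := BPaux.abs_ge_of_int hlk
        have h4 : lam * (k:ℝ) ≤ lam * |(l:ℝ)| := mul_le_mul_of_nonneg_left h3 hlam.le
        have h5 := BPaux.dist_tri_real hconn (γ^l • x₀) s (γ'^t • x₀)
        have h6 : (X.dist (γ^l • x₀) s : ℝ) ≤ R₀ := by rw [SimpleGraph.dist_comm]; exact hso0
        have h8 : (0:ℝ) ≤ (X.dist x₀ (γ'^t • x₀) : ℝ) := by positivity
        have h7 : FARv + R₀ + 2*μ ≤ lam * k := hkγ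
        rw [hFARv_def] at h7
        linarith
      have fx0 : -(k:ℤ) ≤ l → l ≤ (k:ℤ) → (X.dist s x₀ : ℝ) ≤ R₁ := by
        intro hm1 hm2
        have h1 := BPaux.orbit_step hconn hequiv γ x₀ l
        have h2 : |(l:ℝ)| ≤ (k:ℝ) := BPaux.abs_le_of_int hm1 hm2
        have h3 : (X.dist x₀ (γ • x₀) : ℝ) ≤ c1 := le_max_left _ _
        have h4 := BPaux.dist_tri_real hconn s (γ^l • x₀) x₀
        have h5 : (X.dist (γ^l • x₀) x₀ : ℝ) = (X.dist x₀ (γ^l • x₀) : ℝ) := by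
          rw [SimpleGraph.dist_comm]
        have h6 : |(l:ℝ)| * (X.dist x₀ (γ • x₀) : ℝ) ≤ (k:ℝ) * c1 :=
          mul_le_mul h2 h3 (by positivity) (by positivity)
        rw [hR₁_def]
        linarith
      set lu : ℤ := if 0 ≤ a then l + (k:ℤ) else l - (k:ℤ) with hlu_def
      set lw : ℤ := if 0 ≤ a then l - (k:ℤ) else l + (k:ℤ) with hlw_def
      have hlu_or : (0 ≤ a ∧ lu = l + (k:ℤ) ∧ lw = l - (k:ℤ)) ∨
          (a < 0 ∧ lu = l - (k:ℤ) ∧ lw = l + (k:ℤ)) := by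
        rw [hlu_def, hlw_def]
        by_cases ha : 0 ≤ a
        · exact Or.inl ⟨ha, if_pos ha, if_pos ha⟩
        · exact Or.inr ⟨lt_of_not_ge ha, if_neg ha, if_neg ha⟩
      have hfarlu : μ + 2*δ + 2*D + 2 ≤ (X.dist s (γ^lu • x₀) : ℝ) :=
        certA lu (by rcases hlu_or with ⟨ha', he1, he2⟩ | ⟨ha', he1, he2⟩ <;> omega)
      have hp1ne : ((γ:G)^(lu) • XT (S.col ((((γ:G)^(lu)))⁻¹ • s))) ≠ s := hne_far _ _ (hCgdist lu) hfarlu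
      have P1 : S.dmod s u ((γ:G)^(lu) • XT (S.col ((((γ:G)^(lu)))⁻¹ • s))) ≤ C → S.dpi s u ((γ:G)^(lu) • XT (S.col ((((γ:G)^(lu)))⁻¹ • s))) ≤ PB := fun hin =>
        piece_avoid u ((γ:G)^(lu) • XT (S.col ((((γ:G)^(lu)))⁻¹ • s))) hucol (hCgcol lu) hune hp1ne (fun _ => hin)
      by_cases hBa : ((k:ℤ) ≤ a - l ∨ a - l ≤ -(k:ℤ))
      · have hP1av : S.dmod s u ((γ:G)^(lu) • XT (S.col ((((γ:G)^(lu)))⁻¹ • s))) ≤ C :=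
          BPaux.avoid_gamma hconn hslim hδ hequiv hbgit hμ0 hD0 hμ a lu hucol (hCgcol lu)
            hune hp1ne hudist (hCgdist lu)
            (fun t h1 h2 => certA t (by rcases hlu_or with ⟨ha', he1, he2⟩ | ⟨ha', he1, he2⟩ <;> omega))
        by_cases hBl : ((k:ℤ) ≤ l ∨ l ≤ -(k:ℤ))
        · -- G1 : u — Cg lu — Cg lw — w
          have hfarlw : μ + 2*δ + 2*D + 2 ≤ (X.dist s (γ^lw • x₀) : ℝ) :=
            certA lw (by rcases hlu_or with ⟨ha', he1, he2⟩ | ⟨ha', he1, he2⟩ <;> omega)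
          have hp2ne : ((γ:G)^(lw) • XT (S.col ((((γ:G)^(lw)))⁻¹ • s))) ≠ s := hne_far _ _ (hCgdist lw) hfarlw
          have hf1 : (γ:G)^lw • ((γ:G)^(lu - lw) • XT (S.col ((((γ:G)^lu))⁻¹ • s))) = ((γ:G)^(lu) • XT (S.col ((((γ:G)^(lu)))⁻¹ • s))) := by
            rw [BPaux.zsmul_comp]
            have he : lw + (lu - lw) = lu := by omega
            rw [he]
          have hf2 : (γ:G)^lw • (((γ':G)^(0:ℤ)) • XT (S.col ((((γ:G)^lw))⁻¹ • s))) = ((γ:G)^(lw) • XT (S.col ((((γ:G)^(lw)))⁻¹ • s))) := by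
            rw [zpow_zero, one_smul]
          have hDf12 : S.Dfnd s ((γ:G)^(lu) • XT (S.col ((((γ:G)^(lu)))⁻¹ • s))) ((γ:G)^(lw) • XT (S.col ((((γ:G)^(lw)))⁻¹ • s))) :=
            ⟨S.act_piece _ _ (hCgcol lu), S.act_piece _ _ (hCgcol lw), hp1ne, hp2ne⟩
          have P2 : S.dang s ((γ:G)^(lu) • XT (S.col ((((γ:G)^(lu)))⁻¹ • s))) ((γ:G)^(lw) • XT (S.col ((((γ:G)^(lw)))⁻¹ • s))) ≤ A := by
            have hs0 := hseed ((γ:G)^lw) (lu - lw) 0 (by rcases hlu_or with ⟨ha', he1, he2⟩ | ⟨ha', he1, he2⟩ <;> omega) (by rcases hlu_or with ⟨ha', he1, he2⟩ | ⟨ha', he1, he2⟩ <;> omega) (by omega) (by omega)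
              (XT _) (hXTseeds _) (XT _) (hXTseeds _) s (by rw [hf1, hf2]; exact hDf12)
            rw [hf1, hf2] at hs0
            exact hs0
          have P3 : S.dmod s ((γ:G)^(lw) • XT (S.col ((((γ:G)^(lw)))⁻¹ • s))) w ≤ C :=
            BPaux.avoid_mixed hconn hslim hδ hequiv hbgit hμ0 hD0 hμ lw b (hCgcol lw) hwcol
              hp2ne hwne (hCgdist lw) hwdist
              (fun t h1 h2 => certA t (by rcases hlu_or with ⟨ha', he1, he2⟩ | ⟨ha', he1, he2⟩ <;> omega))
              (fun t _ _ => certB hBl t)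
          exact assemble3 _ _ (S.act_piece _ _ (hCgcol lu)) (S.act_piece _ _ (hCgcol lw))
            hp1ne hp2ne (P1 hP1av)
            (piece_seed _ _ (hCgcol lu) (hCgcol lw) hp1ne hp2ne P2)
            (piece_avoid _ _ (hCgcol lw) hwcol hp2ne hwne (fun _ => P3))
        · -- G2 : s is near the basepoint region on the γ side
          rw [not_or] at hBl
          obtain ⟨hBl1, hBl2⟩ := hBl
          push_neg at hBl1 hBl2
          have hsx0 : (X.dist s x₀ : ℝ) ≤ R₁ := fx0 (by omega) (by omega)
          by_cases hBb : ((k₂:ℤ) ≤ b ∨ b ≤ -(k₂:ℤ))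
          · -- G2a : u — Cg lu — Cg' ld — w
            set ld : ℤ := if 0 ≤ b then (k₂:ℤ) else -(k₂:ℤ) with hld_def
            have hld_or : (0 ≤ b ∧ ld = (k₂:ℤ)) ∨ (b < 0 ∧ ld = -(k₂:ℤ)) := by
              rw [hld_def]
              by_cases hb : 0 ≤ b
              · exact Or.inl ⟨hb, if_pos hb⟩
              · exact Or.inr ⟨lt_of_not_ge hb, if_neg hb⟩
            have hfarld : μ + 2*δ + 2*D + 2 ≤ (X.dist s (γ'^ld • x₀) : ℝ) :=
              certD hsx0 ld (by rcases hld_or with ⟨hb', he1⟩ | ⟨hb', he1⟩ <;> omega)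
            have hp2ne : ((γ':G)^(ld) • XT (S.col ((((γ':G)^(ld)))⁻¹ • s))) ≠ s := hne_far _ _ (hCg'dist ld) hfarld
            have hf1 : (1:G) • ((γ:G)^lu • XT (S.col ((((γ:G)^lu))⁻¹ • s))) = ((γ:G)^(lu) • XT (S.col ((((γ:G)^(lu)))⁻¹ • s))) := one_smul _ _
            have hf2 : (1:G) • ((γ':G)^ld • XT (S.col ((((γ':G)^ld))⁻¹ • s))) = ((γ':G)^(ld) • XT (S.col ((((γ':G)^(ld)))⁻¹ • s))) := one_smul _ _
            have hDf12 : S.Dfnd s ((γ:G)^(lu) • XT (S.col ((((γ:G)^(lu)))⁻¹ • s))) ((γ':G)^(ld) • XT (S.col ((((γ':G)^(ld)))⁻¹ • s))) :=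
              ⟨S.act_piece _ _ (hCgcol lu), S.act_piece _ _ (hCg'col ld), hp1ne, hp2ne⟩
            have P2 : S.dang s ((γ:G)^(lu) • XT (S.col ((((γ:G)^(lu)))⁻¹ • s))) ((γ':G)^(ld) • XT (S.col ((((γ':G)^(ld)))⁻¹ • s))) ≤ A := by
              have hs0 := hseed (1:G) lu ld (by rcases hlu_or with ⟨ha', he1, he2⟩ | ⟨ha', he1, he2⟩ <;> omega)
                (by rcases hlu_or with ⟨ha', he1, he2⟩ | ⟨ha', he1, he2⟩ <;> omega)
                (by rcases hld_or with ⟨hb', he1⟩ | ⟨hb', he1⟩ <;> omega)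
                (by rcases hld_or with ⟨hb', he1⟩ | ⟨hb', he1⟩ <;> omega)
                (XT _) (hXTseeds _) (XT _) (hXTseeds _) s (by rw [hf1, hf2]; exact hDf12)
              rw [hf1, hf2] at hs0
              exact hs0
            have P3 : S.dmod s ((γ':G)^(ld) • XT (S.col ((((γ':G)^(ld)))⁻¹ • s))) w ≤ C :=
              BPaux.avoid_gamma' hconn hslim hδ hequiv hbgit hμ0 hD0 hμ ld b (hCg'col ld) hwcol
                hp2ne hwne (hCg'dist ld) hwdist
                (fun t h1 h2 => certD hsx0 t (by rcases hld_or with ⟨hb', he1⟩ | ⟨hb', he1⟩ <;> omega))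
            exact assemble3 _ _ (S.act_piece _ _ (hCgcol lu)) (S.act_piece _ _ (hCg'col ld))
              hp1ne hp2ne (P1 hP1av)
              (piece_seed _ _ (hCgcol lu) (hCg'col ld) hp1ne hp2ne P2)
              (piece_avoid _ _ (hCg'col ld) hwcol hp2ne hwne (fun _ => P3))
          · -- G2b : u — Cg lu — w
            rw [not_or] at hBb
            obtain ⟨hBb1, hBb2⟩ := hBb
            push_neg at hBb1 hBb2
            have hf1 : (1:G) • ((γ:G)^lu • XT (S.col ((((γ:G)^lu))⁻¹ • s))) = ((γ:G)^(lu) • XT (S.col ((((γ:G)^(lu)))⁻¹ • s))) := one_smul _ _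
            have hf2 : (1:G) • ((γ':G)^b • ew) = w := by rw [one_smul, hw_def]
            have hDf12 : S.Dfnd s ((γ:G)^(lu) • XT (S.col ((((γ:G)^(lu)))⁻¹ • s))) w :=
              ⟨S.act_piece _ _ (hCgcol lu), hwmem, hp1ne, hwne⟩
            have P2 : S.dang s ((γ:G)^(lu) • XT (S.col ((((γ:G)^(lu)))⁻¹ • s))) w ≤ A := by
              have hs0 := hseed (1:G) lu b (by rcases hlu_or with ⟨ha', he1, he2⟩ | ⟨ha', he1, he2⟩ <;> omega) (by rcases hlu_or with ⟨ha', he1, he2⟩ | ⟨ha', he1, he2⟩ <;> omega) (by omega) (by omega)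
                (XT _) (hXTseeds _) ew hew s (by rw [hf1, hf2]; exact hDf12)
              rw [hf1, hf2] at hs0
              exact hs0
            exact assemble2 _ (S.act_piece _ _ (hCgcol lu)) hp1ne (P1 hP1av)
              (piece_seed _ _ (hCgcol lu) hwcol hp1ne hwne P2)
      · -- ¬hBa : s is near the `a`-end
        rw [not_or] at hBa
        obtain ⟨hBa1, hBa2⟩ := hBa
        push_neg at hBa1 hBa2
        by_cases hBl : ((k:ℤ) ≤ l ∨ l ≤ -(k:ℤ))
        · -- G3 : u — Cg lw — w
          have hfarlw : μ + 2*δ + 2*D + 2 ≤ (X.dist s (γ^lw • x₀) : ℝ) :=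
            certA lw (by rcases hlu_or with ⟨ha', he1, he2⟩ | ⟨ha', he1, he2⟩ <;> omega)
          have hp2ne : ((γ:G)^(lw) • XT (S.col ((((γ:G)^(lw)))⁻¹ • s))) ≠ s := hne_far _ _ (hCgdist lw) hfarlw
          have hf1 : (γ:G)^lw • ((γ:G)^(a - lw) • eu) = u := by
            rw [BPaux.zsmul_comp]
            have he : lw + (a - lw) = a := by omega
            rw [he, hu_def]
          have hf2 : (γ:G)^lw • (((γ':G)^(0:ℤ)) • XT (S.col ((((γ:G)^lw))⁻¹ • s))) = ((γ:G)^(lw) • XT (S.col ((((γ:G)^(lw)))⁻¹ • s))) := by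
            rw [zpow_zero, one_smul]
          have hDf12 : S.Dfnd s u ((γ:G)^(lw) • XT (S.col ((((γ:G)^(lw)))⁻¹ • s))) :=
            ⟨humem, S.act_piece _ _ (hCgcol lw), hune, hp2ne⟩
          have P1' : S.dang s u ((γ:G)^(lw) • XT (S.col ((((γ:G)^(lw)))⁻¹ • s))) ≤ A := by
            have hs0 := hseed ((γ:G)^lw) (a - lw) 0 (by rcases hlu_or with ⟨ha', he1, he2⟩ | ⟨ha', he1, he2⟩ <;> omega) (by rcases hlu_or with ⟨ha', he1, he2⟩ | ⟨ha', he1, he2⟩ <;> omega) (by omega) (by omega)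
              eu heu (XT _) (hXTseeds _) s (by rw [hf1, hf2]; exact hDf12)
            rw [hf1, hf2] at hs0
            exact hs0
          have P2 : S.dmod s ((γ:G)^(lw) • XT (S.col ((((γ:G)^(lw)))⁻¹ • s))) w ≤ C :=
            BPaux.avoid_mixed hconn hslim hδ hequiv hbgit hμ0 hD0 hμ lw b (hCgcol lw) hwcol
              hp2ne hwne (hCgdist lw) hwdist
              (fun t h1 h2 => certA t (by rcases hlu_or with ⟨ha', he1, he2⟩ | ⟨ha', he1, he2⟩ <;> omega))
              (fun t _ _ => certB hBl t)
          exact assemble2 _ (S.act_piece _ _ (hCgcol lw)) hp2ne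
            (piece_seed _ _ hucol (hCgcol lw) hune hp2ne P1')
            (piece_avoid _ _ (hCgcol lw) hwcol hp2ne hwne (fun _ => P2))
        · -- G4
          rw [not_or] at hBl
          obtain ⟨hBl1, hBl2⟩ := hBl
          push_neg at hBl1 hBl2
          have hsx0 : (X.dist s x₀ : ℝ) ≤ R₁ := fx0 (by omega) (by omega)
          by_cases hBb : ((k₂:ℤ) ≤ b ∨ b ≤ -(k₂:ℤ))
          · -- G4a : u — Cg' ld — w
            set ld : ℤ := if 0 ≤ b then (k₂:ℤ) else -(k₂:ℤ) with hld_def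
            have hld_or : (0 ≤ b ∧ ld = (k₂:ℤ)) ∨ (b < 0 ∧ ld = -(k₂:ℤ)) := by
              rw [hld_def]
              by_cases hb : 0 ≤ b
              · exact Or.inl ⟨hb, if_pos hb⟩
              · exact Or.inr ⟨lt_of_not_ge hb, if_neg hb⟩
            have hfarld : μ + 2*δ + 2*D + 2 ≤ (X.dist s (γ'^ld • x₀) : ℝ) :=
              certD hsx0 ld (by rcases hld_or with ⟨hb', he1⟩ | ⟨hb', he1⟩ <;> omega)
            have hp2ne : ((γ':G)^(ld) • XT (S.col ((((γ':G)^(ld)))⁻¹ • s))) ≠ s := hne_far _ _ (hCg'dist ld) hfarld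
            have hf1 : (1:G) • ((γ:G)^a • eu) = u := by rw [one_smul, hu_def]
            have hf2 : (1:G) • ((γ':G)^ld • XT (S.col ((((γ':G)^ld))⁻¹ • s))) = ((γ':G)^(ld) • XT (S.col ((((γ':G)^(ld)))⁻¹ • s))) := one_smul _ _
            have hDf12 : S.Dfnd s u ((γ':G)^(ld) • XT (S.col ((((γ':G)^(ld)))⁻¹ • s))) :=
              ⟨humem, S.act_piece _ _ (hCg'col ld), hune, hp2ne⟩
            have P1' : S.dang s u ((γ':G)^(ld) • XT (S.col ((((γ':G)^(ld)))⁻¹ • s))) ≤ A := by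
              have hs0 := hseed (1:G) a ld (by rcases hlu_or with ⟨ha', he1, he2⟩ | ⟨ha', he1, he2⟩ <;> omega) (by rcases hlu_or with ⟨ha', he1, he2⟩ | ⟨ha', he1, he2⟩ <;> omega)
                (by rcases hld_or with ⟨hb', he1⟩ | ⟨hb', he1⟩ <;> omega)
                (by rcases hld_or with ⟨hb', he1⟩ | ⟨hb', he1⟩ <;> omega)
                eu heu (XT _) (hXTseeds _) s (by rw [hf1, hf2]; exact hDf12)
              rw [hf1, hf2] at hs0
              exact hs0
            have P2 : S.dmod s ((γ':G)^(ld) • XT (S.col ((((γ':G)^(ld)))⁻¹ • s))) w ≤ C :=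
              BPaux.avoid_gamma' hconn hslim hδ hequiv hbgit hμ0 hD0 hμ ld b (hCg'col ld) hwcol
                hp2ne hwne (hCg'dist ld) hwdist
                (fun t h1 h2 => certD hsx0 t (by rcases hld_or with ⟨hb', he1⟩ | ⟨hb', he1⟩ <;> omega))
            exact assemble2 _ (S.act_piece _ _ (hCg'col ld)) hp2ne
              (piece_seed _ _ hucol (hCg'col ld) hune hp2ne P1')
              (piece_avoid _ _ (hCg'col ld) hwcol hp2ne hwne (fun _ => P2))
          · -- G4b : single seed pair (u, w)
            rw [not_or] at hBb
            obtain ⟨hBb1, hBb2⟩ := hBb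
            push_neg at hBb1 hBb2
            have hf1 : (1:G) • ((γ:G)^a • eu) = u := by rw [one_smul, hu_def]
            have hf2 : (1:G) • ((γ':G)^b • ew) = w := by rw [one_smul, hw_def]
            have hDf12 : S.Dfnd s u w := ⟨humem, hwmem, hune, hwne⟩
            have P1' : S.dang s u w ≤ A := by
              have hs0 := hseed (1:G) a b (by rcases hlu_or with ⟨ha', he1, he2⟩ | ⟨ha', he1, he2⟩ <;> omega) (by rcases hlu_or with ⟨ha', he1, he2⟩ | ⟨ha', he1, he2⟩ <;> omega) (by omega) (by omega)
                eu heu ew hew s (by rw [hf1, hf2]; exact hDf12)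
              rw [hf1, hf2] at hs0
              exact hs0
            have := piece_seed _ _ hucol hwcol hune hwne P1'
            linarith

    · -- the near orbit point is on the γ' side
      subst ho
      have certA' : ∀ t : ℤ, ((k:ℤ) ≤ t - l' ∨ t - l' ≤ -(k:ℤ)) →
          μ + 2*δ + 2*D + 2 ≤ (X.dist s (γ'^t • x₀) : ℝ) := by
        intro t ht
        have h1 := BPaux.lox_sep hconn hequiv hlox' t l'
        have h2 : (k:ℝ) ≤ |((t - l' : ℤ) : ℝ)| := BPaux.abs_ge_of_int ht
        have h4 : lam' * (k:ℝ) ≤ lam' * |((t-l':ℤ):ℝ)| := mul_le_mul_of_nonneg_left h2 hlam'.le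
        have h5 := BPaux.dist_tri_real hconn (γ'^t • x₀) s (γ'^(l') • x₀)
        have h6 : (X.dist (γ'^t • x₀) s : ℝ) = (X.dist s (γ'^t • x₀) : ℝ) := by
          rw [SimpleGraph.dist_comm]
        have h7 : FARv + R₀ + 2*μ ≤ lam' * k := hkγ'
        rw [hFARv_def] at h7
        linarith [hso0]
      have certB' : ((k:ℤ) ≤ l' ∨ l' ≤ -(k:ℤ)) → ∀ t : ℤ,
          μ + 2*δ + 2*D + 2 ≤ (X.dist s (γ^t • x₀) : ℝ) := by
        intro hlk t
        have h1 := BPaux.dist_through hconn hμ t l'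
        have h2 := hlox' l'
        have h3 : (k:ℝ) ≤ |(l':ℝ)| := BPaux.abs_ge_of_int hlk
        have h4 : lam' * (k:ℝ) ≤ lam' * |(l':ℝ)| := mul_le_mul_of_nonneg_left h3 hlam'.le
        have h5 := BPaux.dist_tri_real hconn (γ^t • x₀) s (γ'^(l') • x₀)
        have h6 : (X.dist (γ^t • x₀) s : ℝ) = (X.dist s (γ^t • x₀) : ℝ) := by
          rw [SimpleGraph.dist_comm]
        have h8 : (0:ℝ) ≤ (X.dist x₀ (γ^t • x₀) : ℝ) := by positivity
        have h7 : FARv + R₀ + 2*μ ≤ lam' * k := hkγ'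
        rw [hFARv_def] at h7
        linarith [hso0]
      have fx0' : -(k:ℤ) ≤ l' → l' ≤ (k:ℤ) → (X.dist s x₀ : ℝ) ≤ R₁ := by
        intro hm1 hm2
        have h1 := BPaux.orbit_step hconn hequiv γ' x₀ l'
        have h2 : |(l':ℝ)| ≤ (k:ℝ) := BPaux.abs_le_of_int hm1 hm2
        have h3 : (X.dist x₀ (γ' • x₀) : ℝ) ≤ c1 := le_max_right _ _
        have h4 := BPaux.dist_tri_real hconn s (γ'^(l') • x₀) x₀
        have h5 : (X.dist (γ'^(l') • x₀) x₀ : ℝ) = (X.dist x₀ (γ'^(l') • x₀) : ℝ) := by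
          rw [SimpleGraph.dist_comm]
        have h6 : |(l':ℝ)| * (X.dist x₀ (γ' • x₀) : ℝ) ≤ (k:ℝ) * c1 :=
          mul_le_mul h2 h3 (by positivity) (by positivity)
        rw [hR₁_def]
        linarith [hso0]
      set lb : ℤ := if 0 ≤ b then l' + (k:ℤ) else l' - (k:ℤ) with hlb_def
      set l0 : ℤ := if 0 ≤ b then l' - (k:ℤ) else l' + (k:ℤ) with hl0_def
      have hlb_or : (0 ≤ b ∧ lb = l' + (k:ℤ) ∧ l0 = l' - (k:ℤ)) ∨
          (b < 0 ∧ lb = l' - (k:ℤ) ∧ l0 = l' + (k:ℤ)) := by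
        rw [hlb_def, hl0_def]
        by_cases hb : 0 ≤ b
        · exact Or.inl ⟨hb, if_pos hb, if_pos hb⟩
        · exact Or.inr ⟨lt_of_not_ge hb, if_neg hb, if_neg hb⟩
      have hfarlb : μ + 2*δ + 2*D + 2 ≤ (X.dist s (γ'^lb • x₀) : ℝ) :=
        certA' lb (by rcases hlb_or with ⟨hb', he1, he2⟩ | ⟨hb', he1, he2⟩ <;> omega)
      have hpbne : ((γ':G)^(lb) • XT (S.col ((((γ':G)^(lb)))⁻¹ • s))) ≠ s := hne_far _ _ (hCg'dist lb) hfarlb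
      by_cases hBb : ((k:ℤ) ≤ b - l' ∨ b - l' ≤ -(k:ℤ))
      · have hP3av : S.dmod s ((γ':G)^(lb) • XT (S.col ((((γ':G)^(lb)))⁻¹ • s))) w ≤ C :=
          BPaux.avoid_gamma' hconn hslim hδ hequiv hbgit hμ0 hD0 hμ lb b (hCg'col lb) hwcol
            hpbne hwne (hCg'dist lb) hwdist
            (fun t h1 h2 => certA' t (by rcases hlb_or with ⟨hb', he1, he2⟩ | ⟨hb', he1, he2⟩ <;> omega))
        by_cases hBl : ((k:ℤ) ≤ l' ∨ l' ≤ -(k:ℤ))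
        · -- G1' : u — Cg' l0 — Cg' lb — w
          have hfarl0 : μ + 2*δ + 2*D + 2 ≤ (X.dist s (γ'^l0 • x₀) : ℝ) :=
            certA' l0 (by rcases hlb_or with ⟨hb', he1, he2⟩ | ⟨hb', he1, he2⟩ <;> omega)
          have hp0ne : ((γ':G)^(l0) • XT (S.col ((((γ':G)^(l0)))⁻¹ • s))) ≠ s := hne_far _ _ (hCg'dist l0) hfarl0
          have P1 : S.dmod s u ((γ':G)^(l0) • XT (S.col ((((γ':G)^(l0)))⁻¹ • s))) ≤ C :=
            BPaux.avoid_mixed hconn hslim hδ hequiv hbgit hμ0 hD0 hμ a l0 hucol (hCg'col l0)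
              hune hp0ne hudist (hCg'dist l0)
              (fun t _ _ => certB' hBl t)
              (fun t h1 h2 => certA' t (by rcases hlb_or with ⟨hb', he1, he2⟩ | ⟨hb', he1, he2⟩ <;> omega))
          have hf1 : (γ':G)^l0 • (((γ:G)^(0:ℤ)) • XT (S.col ((((γ':G)^l0))⁻¹ • s))) = ((γ':G)^(l0) • XT (S.col ((((γ':G)^(l0)))⁻¹ • s))) := by
            rw [zpow_zero, one_smul]
          have hf2 : (γ':G)^l0 • ((γ':G)^(lb - l0) • XT (S.col ((((γ':G)^lb))⁻¹ • s))) = ((γ':G)^(lb) • XT (S.col ((((γ':G)^(lb)))⁻¹ • s))) := by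
            rw [BPaux.zsmul_comp]
            have he : l0 + (lb - l0) = lb := by omega
            rw [he]
          have hDf12 : S.Dfnd s ((γ':G)^(l0) • XT (S.col ((((γ':G)^(l0)))⁻¹ • s))) ((γ':G)^(lb) • XT (S.col ((((γ':G)^(lb)))⁻¹ • s))) :=
            ⟨S.act_piece _ _ (hCg'col l0), S.act_piece _ _ (hCg'col lb), hp0ne, hpbne⟩
          have P2 : S.dang s ((γ':G)^(l0) • XT (S.col ((((γ':G)^(l0)))⁻¹ • s))) ((γ':G)^(lb) • XT (S.col ((((γ':G)^(lb)))⁻¹ • s))) ≤ A := by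
            have hs0 := hseed ((γ':G)^l0) 0 (lb - l0) (by omega) (by omega) (by rcases hlb_or with ⟨hb', he1, he2⟩ | ⟨hb', he1, he2⟩ <;> omega) (by rcases hlb_or with ⟨hb', he1, he2⟩ | ⟨hb', he1, he2⟩ <;> omega)
              (XT _) (hXTseeds _) (XT _) (hXTseeds _) s (by rw [hf1, hf2]; exact hDf12)
            rw [hf1, hf2] at hs0
            exact hs0
          exact assemble3 _ _ (S.act_piece _ _ (hCg'col l0)) (S.act_piece _ _ (hCg'col lb))
            hp0ne hpbne
            (piece_avoid _ _ hucol (hCg'col l0) hune hp0ne (fun _ => P1))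
            (piece_seed _ _ (hCg'col l0) (hCg'col lb) hp0ne hpbne P2)
            (piece_avoid _ _ (hCg'col lb) hwcol hpbne hwne (fun _ => hP3av))
        · -- G2'
          rw [not_or] at hBl
          obtain ⟨hBl1, hBl2⟩ := hBl
          push_neg at hBl1 hBl2
          have hsx0 : (X.dist s x₀ : ℝ) ≤ R₁ := fx0' (by omega) (by omega)
          by_cases hBa2 : ((k₂:ℤ) ≤ a ∨ a ≤ -(k₂:ℤ))
          · -- G2a' : u — Cg lc — Cg' lb — w
            set lc : ℤ := if 0 ≤ a then (k₂:ℤ) else -(k₂:ℤ) with hlc_def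
            have hlc_or : (0 ≤ a ∧ lc = (k₂:ℤ)) ∨ (a < 0 ∧ lc = -(k₂:ℤ)) := by
              rw [hlc_def]
              by_cases ha : 0 ≤ a
              · exact Or.inl ⟨ha, if_pos ha⟩
              · exact Or.inr ⟨lt_of_not_ge ha, if_neg ha⟩
            have hfarlc : μ + 2*δ + 2*D + 2 ≤ (X.dist s (γ^lc • x₀) : ℝ) :=
              certC hsx0 lc (by rcases hlc_or with ⟨ha', he1⟩ | ⟨ha', he1⟩ <;> omega)
            have hpcne : ((γ:G)^(lc) • XT (S.col ((((γ:G)^(lc)))⁻¹ • s))) ≠ s := hne_far _ _ (hCgdist lc) hfarlc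
            have P1 : S.dmod s u ((γ:G)^(lc) • XT (S.col ((((γ:G)^(lc)))⁻¹ • s))) ≤ C :=
              BPaux.avoid_gamma hconn hslim hδ hequiv hbgit hμ0 hD0 hμ a lc hucol (hCgcol lc)
                hune hpcne hudist (hCgdist lc)
                (fun t h1 h2 => certC hsx0 t (by rcases hlc_or with ⟨ha', he1⟩ | ⟨ha', he1⟩ <;> omega))
            have hf1 : (1:G) • ((γ:G)^lc • XT (S.col ((((γ:G)^lc))⁻¹ • s))) = ((γ:G)^(lc) • XT (S.col ((((γ:G)^(lc)))⁻¹ • s))) := one_smul _ _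
            have hf2 : (1:G) • ((γ':G)^lb • XT (S.col ((((γ':G)^lb))⁻¹ • s))) = ((γ':G)^(lb) • XT (S.col ((((γ':G)^(lb)))⁻¹ • s))) := one_smul _ _
            have hDf12 : S.Dfnd s ((γ:G)^(lc) • XT (S.col ((((γ:G)^(lc)))⁻¹ • s))) ((γ':G)^(lb) • XT (S.col ((((γ':G)^(lb)))⁻¹ • s))) :=
              ⟨S.act_piece _ _ (hCgcol lc), S.act_piece _ _ (hCg'col lb), hpcne, hpbne⟩
            have P2 : S.dang s ((γ:G)^(lc) • XT (S.col ((((γ:G)^(lc)))⁻¹ • s))) ((γ':G)^(lb) • XT (S.col ((((γ':G)^(lb)))⁻¹ • s))) ≤ A := by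
              have hs0 := hseed (1:G) lc lb (by rcases hlc_or with ⟨ha', he1⟩ | ⟨ha', he1⟩ <;> omega) (by rcases hlc_or with ⟨ha', he1⟩ | ⟨ha', he1⟩ <;> omega) (by rcases hlb_or with ⟨hb', he1, he2⟩ | ⟨hb', he1, he2⟩ <;> omega) (by rcases hlb_or with ⟨hb', he1, he2⟩ | ⟨hb', he1, he2⟩ <;> omega)
                (XT _) (hXTseeds _) (XT _) (hXTseeds _) s (by rw [hf1, hf2]; exact hDf12)
              rw [hf1, hf2] at hs0
              exact hs0
            exact assemble3 _ _ (S.act_piece _ _ (hCgcol lc)) (S.act_piece _ _ (hCg'col lb))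
              hpcne hpbne
              (piece_avoid _ _ hucol (hCgcol lc) hune hpcne (fun _ => P1))
              (piece_seed _ _ (hCgcol lc) (hCg'col lb) hpcne hpbne P2)
              (piece_avoid _ _ (hCg'col lb) hwcol hpbne hwne (fun _ => hP3av))
          · -- G2b' : u — Cg' lb — w
            rw [not_or] at hBa2
            obtain ⟨hBa21, hBa22⟩ := hBa2
            push_neg at hBa21 hBa22
            have hf1 : (1:G) • ((γ:G)^a • eu) = u := by rw [one_smul, hu_def]
            have hf2 : (1:G) • ((γ':G)^lb • XT (S.col ((((γ':G)^lb))⁻¹ • s))) = ((γ':G)^(lb) • XT (S.col ((((γ':G)^(lb)))⁻¹ • s))) := one_smul _ _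
            have hDf12 : S.Dfnd s u ((γ':G)^(lb) • XT (S.col ((((γ':G)^(lb)))⁻¹ • s))) :=
              ⟨humem, S.act_piece _ _ (hCg'col lb), hune, hpbne⟩
            have P1' : S.dang s u ((γ':G)^(lb) • XT (S.col ((((γ':G)^(lb)))⁻¹ • s))) ≤ A := by
              have hs0 := hseed (1:G) a lb (by omega) (by omega) (by rcases hlb_or with ⟨hb', he1, he2⟩ | ⟨hb', he1, he2⟩ <;> omega) (by rcases hlb_or with ⟨hb', he1, he2⟩ | ⟨hb', he1, he2⟩ <;> omega)
                eu heu (XT _) (hXTseeds _) s (by rw [hf1, hf2]; exact hDf12)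
              rw [hf1, hf2] at hs0
              exact hs0
            exact assemble2 _ (S.act_piece _ _ (hCg'col lb)) hpbne
              (piece_seed _ _ hucol (hCg'col lb) hune hpbne P1')
              (piece_avoid _ _ (hCg'col lb) hwcol hpbne hwne (fun _ => hP3av))
      · -- ¬hBb : s is near the `b`-end on the γ' side
        rw [not_or] at hBb
        obtain ⟨hBb1, hBb2⟩ := hBb
        push_neg at hBb1 hBb2
        by_cases hBl : ((k:ℤ) ≤ l' ∨ l' ≤ -(k:ℤ))
        · -- G3' : u — Cg' l0 — w
          have hfarl0 : μ + 2*δ + 2*D + 2 ≤ (X.dist s (γ'^l0 • x₀) : ℝ) :=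
            certA' l0 (by rcases hlb_or with ⟨hb', he1, he2⟩ | ⟨hb', he1, he2⟩ <;> omega)
          have hp0ne : ((γ':G)^(l0) • XT (S.col ((((γ':G)^(l0)))⁻¹ • s))) ≠ s := hne_far _ _ (hCg'dist l0) hfarl0
          have P1 : S.dmod s u ((γ':G)^(l0) • XT (S.col ((((γ':G)^(l0)))⁻¹ • s))) ≤ C :=
            BPaux.avoid_mixed hconn hslim hδ hequiv hbgit hμ0 hD0 hμ a l0 hucol (hCg'col l0)
              hune hp0ne hudist (hCg'dist l0)
              (fun t _ _ => certB' hBl t)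
              (fun t h1 h2 => certA' t (by rcases hlb_or with ⟨hb', he1, he2⟩ | ⟨hb', he1, he2⟩ <;> omega))
          have hf1 : (γ':G)^l0 • (((γ:G)^(0:ℤ)) • XT (S.col ((((γ':G)^l0))⁻¹ • s))) = ((γ':G)^(l0) • XT (S.col ((((γ':G)^(l0)))⁻¹ • s))) := by
            rw [zpow_zero, one_smul]
          have hf2 : (γ':G)^l0 • ((γ':G)^(b - l0) • ew) = w := by
            rw [BPaux.zsmul_comp]
            have he : l0 + (b - l0) = b := by omega
            rw [he, hw_def]
          have hDf12 : S.Dfnd s ((γ':G)^(l0) • XT (S.col ((((γ':G)^(l0)))⁻¹ • s))) w :=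
            ⟨S.act_piece _ _ (hCg'col l0), hwmem, hp0ne, hwne⟩
          have P2 : S.dang s ((γ':G)^(l0) • XT (S.col ((((γ':G)^(l0)))⁻¹ • s))) w ≤ A := by
            have hs0 := hseed ((γ':G)^l0) 0 (b - l0) (by omega) (by omega) (by rcases hlb_or with ⟨hb', he1, he2⟩ | ⟨hb', he1, he2⟩ <;> omega) (by rcases hlb_or with ⟨hb', he1, he2⟩ | ⟨hb', he1, he2⟩ <;> omega)
              (XT _) (hXTseeds _) ew hew s (by rw [hf1, hf2]; exact hDf12)
            rw [hf1, hf2] at hs0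
            exact hs0
          exact assemble2 _ (S.act_piece _ _ (hCg'col l0)) hp0ne
            (piece_avoid _ _ hucol (hCg'col l0) hune hp0ne (fun _ => P1))
            (piece_seed _ _ (hCg'col l0) hwcol hp0ne hwne P2)
        · -- G4'
          rw [not_or] at hBl
          obtain ⟨hBl1, hBl2⟩ := hBl
          push_neg at hBl1 hBl2
          have hsx0 : (X.dist s x₀ : ℝ) ≤ R₁ := fx0' (by omega) (by omega)
          by_cases hBa2 : ((k₂:ℤ) ≤ a ∨ a ≤ -(k₂:ℤ))
          · -- G4a' : u — Cg lc — w
            set lc : ℤ := if 0 ≤ a then (k₂:ℤ) else -(k₂:ℤ) with hlc_def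
            have hlc_or : (0 ≤ a ∧ lc = (k₂:ℤ)) ∨ (a < 0 ∧ lc = -(k₂:ℤ)) := by
              rw [hlc_def]
              by_cases ha : 0 ≤ a
              · exact Or.inl ⟨ha, if_pos ha⟩
              · exact Or.inr ⟨lt_of_not_ge ha, if_neg ha⟩
            have hfarlc : μ + 2*δ + 2*D + 2 ≤ (X.dist s (γ^lc • x₀) : ℝ) :=
              certC hsx0 lc (by rcases hlc_or with ⟨ha', he1⟩ | ⟨ha', he1⟩ <;> omega)
            have hpcne : ((γ:G)^(lc) • XT (S.col ((((γ:G)^(lc)))⁻¹ • s))) ≠ s := hne_far _ _ (hCgdist lc) hfarlc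
            have P1 : S.dmod s u ((γ:G)^(lc) • XT (S.col ((((γ:G)^(lc)))⁻¹ • s))) ≤ C :=
              BPaux.avoid_gamma hconn hslim hδ hequiv hbgit hμ0 hD0 hμ a lc hucol (hCgcol lc)
                hune hpcne hudist (hCgdist lc)
                (fun t h1 h2 => certC hsx0 t (by rcases hlc_or with ⟨ha', he1⟩ | ⟨ha', he1⟩ <;> omega))
            have hf1 : (1:G) • ((γ:G)^lc • XT (S.col ((((γ:G)^lc))⁻¹ • s))) = ((γ:G)^(lc) • XT (S.col ((((γ:G)^(lc)))⁻¹ • s))) := one_smul _ _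
            have hf2 : (1:G) • ((γ':G)^b • ew) = w := by rw [one_smul, hw_def]
            have hDf12 : S.Dfnd s ((γ:G)^(lc) • XT (S.col ((((γ:G)^(lc)))⁻¹ • s))) w :=
              ⟨S.act_piece _ _ (hCgcol lc), hwmem, hpcne, hwne⟩
            have P2 : S.dang s ((γ:G)^(lc) • XT (S.col ((((γ:G)^(lc)))⁻¹ • s))) w ≤ A := by
              have hs0 := hseed (1:G) lc b (by rcases hlc_or with ⟨ha', he1⟩ | ⟨ha', he1⟩ <;> omega) (by rcases hlc_or with ⟨ha', he1⟩ | ⟨ha', he1⟩ <;> omega) (by omega) (by omega)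
                (XT _) (hXTseeds _) ew hew s (by rw [hf1, hf2]; exact hDf12)
              rw [hf1, hf2] at hs0
              exact hs0
            exact assemble2 _ (S.act_piece _ _ (hCgcol lc)) hpcne
              (piece_avoid _ _ hucol (hCgcol lc) hune hpcne (fun _ => P1))
              (piece_seed _ _ (hCgcol lc) hwcol hpcne hwne P2)
          · -- G4b' : single seed pair (u, w)
            rw [not_or] at hBa2
            obtain ⟨hBa21, hBa22⟩ := hBa2
            push_neg at hBa21 hBa22
            have hf1 : (1:G) • ((γ:G)^a • eu) = u := by rw [one_smul, hu_def]
            have hf2 : (1:G) • ((γ':G)^b • ew) = w := by rw [one_smul, hw_def]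
            have hDf12 : S.Dfnd s u w := ⟨humem, hwmem, hune, hwne⟩
            have P1' : S.dang s u w ≤ A := by
              have hs0 := hseed (1:G) a b (by omega) (by omega) (by omega) (by omega)
                eu heu ew hew s (by rw [hf1, hf2]; exact hDf12)
              rw [hf1, hf2] at hs0
              exact hs0
            have := piece_seed _ _ hucol hwcol hune hwne P1'
            linarith

  linarith
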